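/- arXiv:1711.02515 — 10 statements merged into one kernel-verified Lean document; each statement's English description precedes it below -/
import Mathlib

section
/- (Lemma 1) If f : ℝⁿ → ℝ is μ-strongly DR-submodular on X (μ ≥ 0), then for any two points x, y ∈ X: ⟨y − x, ∇f(x)⟩ ≥ f(x ∨ y) + f(x ∧ y) − 2·f(x) + (μ/2)‖x − y‖². -/
open scoped RealInnerProductSpace

noncomputable section

/-- `ℝⁿ` with the Euclidean norm. -/
abbrev E (n : ℕ) := EuclideanSpace ℝ (Fin n)

/-- membership in the box `X = {x : 0 ≤ x ≤ ub}` (componentwise). -/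
def inBox {n : ℕ} (ub x : E n) : Prop := ∀ i, 0 ≤ x i ∧ x i ≤ ub i

/-- componentwise maximum. -/
def vsup {n : ℕ} (x y : E n) : E n := WithLp.toLp 2 (fun i => max (x i) (y i))

/-- componentwise minimum. -/
def vinf {n : ℕ} (x y : E n) : E n := WithLp.toLp 2 (fun i => min (x i) (y i))

/-- `μ`-strong DR-submodularity on the box `[0, ub]` (the first-order condition). -/
def StronglyDRSubmodular {n : ℕ} (ub : E n) (μ : ℝ) (f : E n → ℝ) : Prop :=
  ∀ x v : E n, inBox ub x → ((∀ i, 0 ≤ v i) ∨ (∀ i, v i ≤ 0)) → inBox ub (x + v) →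
    f (x + v) ≤ f x + ⟪gradient f x, v⟫ - μ / 2 * ‖v‖ ^ 2

/-- Lemma 1. -/
theorem stmt1 {n : ℕ} (hn : 1 ≤ n) (ub : E n) (hub : ∀ i, 0 < ub i)
    (f : E n → ℝ) (μ : ℝ) (hμ : 0 ≤ μ)
    (hdiff : Differentiable ℝ f)
    (hSDR : StronglyDRSubmodular ub μ f) :
    ∀ x y : E n, inBox ub x → inBox ub y →
      ⟪y - x, gradient f x⟫ ≥
        f (vsup x y) + f (vinf x y) - 2 * f x + μ / 2 * ‖x - y‖ ^ 2 := by
  intro x y hx hy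
  set v : E n := vsup x y - x with hv
  set w : E n := vinf x y - x with hw
  have hxv : x + v = vsup x y := by ext i; simp [hv, vsup]
  have hxw : x + w = vinf x y := by ext i; simp [hw, vinf]
  have hvnn : ∀ i, 0 ≤ v i := by
    intro i
    simp only [hv, PiLp.sub_apply, vsup, PiLp.toLp_apply, sub_nonneg, le_max_iff]
    left; rfl
  have hwnp : ∀ i, w i ≤ 0 := by
    intro i
    simp only [hw, PiLp.sub_apply, vinf, PiLp.toLp_apply, sub_nonpos, min_le_iff]
    left; rfl
  have hboxv : inBox ub (x + v) := by
    rw [hxv]; intro i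
    exact ⟨le_max_of_le_left (hx i).1, max_le (hx i).2 (hy i).2⟩
  have hboxw : inBox ub (x + w) := by
    rw [hxw]; intro i
    exact ⟨le_min (hx i).1 (hy i).1, min_le_of_left_le (hx i).2⟩
  have h1 := hSDR x v hx (Or.inl hvnn) hboxv
  have h2 := hSDR x w hx (Or.inr hwnp) hboxw
  rw [hxv] at h1
  rw [hxw] at h2
  have hsum : v + w = y - x := by
    ext i
    simp only [hv, hw, PiLp.add_apply, PiLp.sub_apply, vsup, vinf, PiLp.toLp_apply]
    rcases le_total (x i) (y i) with h | h
    · rw [max_eq_right h, min_eq_left h]; ring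
    · rw [max_eq_left h, min_eq_right h]; ring
  have hnorm : ‖v‖ ^ 2 + ‖w‖ ^ 2 = ‖x - y‖ ^ 2 := by
    have e : ∀ z : E n, ‖z‖ ^ 2 = ∑ i, (z i) ^ 2 := by
      intro z
      rw [EuclideanSpace.norm_eq, Real.sq_sqrt (by positivity)]
      simp [Real.norm_eq_abs, sq_abs]
    rw [e, e, e, ← Finset.sum_add_distrib]
    apply Finset.sum_congr rfl
    intro i _
    simp only [hv, hw, PiLp.sub_apply, vsup, vinf, PiLp.toLp_apply]
    rcases le_total (x i) (y i) with h | h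
    · rw [max_eq_right h, min_eq_left h]; ring
    · rw [max_eq_left h, min_eq_right h]; ring
  have hip : ⟪y - x, gradient f x⟫ = ⟪gradient f x, v⟫ + ⟪gradient f x, w⟫ := by
    rw [← inner_add_right, hsum, real_inner_comm]
  rw [ge_iff_le, hip]
  nlinarith [h1, h2, hnorm]
end
end

section
/- (Claim 1) Let f : ℝⁿ → ℝ be DR-submodular on X and nonnegative on X. Let x, x* ∈ X, let z ∈ ℝⁿ satisfy 0 ≤ z ≤ ū − x, and set z* := x ∨ x* − x. Then f(x ∨ x*) + f(x ∧ x*) + f(z ∨ z*) + f(z ∧ z*) ≥ f(x*). -/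
open scoped RealInnerProductSpace

noncomputable section

/-- DR-submodularity on the box `[0, ub]`. -/
def DRSubmodular {n : ℕ} (ub : E n) (f : E n → ℝ) : Prop :=
  ∀ a b : E n, inBox ub a → inBox ub b → (∀ i, a i ≤ b i) →
    ∀ (i : Fin n) (k : ℝ), 0 ≤ k →
      inBox ub (a + k • EuclideanSpace.single i 1) →
      inBox ub (b + k • EuclideanSpace.single i 1) →
      f (a + k • EuclideanSpace.single i 1) - f a ≥
        f (b + k • EuclideanSpace.single i 1) - f b

/-- restriction of a vector to a finite set of coordinates. -/
def mask {n : ℕ} (S : Finset (Fin n)) (w : E n) : E n :=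
  WithLp.toLp 2 (fun i => if i ∈ S then w i else 0)

lemma mask_apply {n : ℕ} (S : Finset (Fin n)) (w : E n) (i : Fin n) :
    mask S w i = if i ∈ S then w i else 0 := rfl

lemma add_apply' {n : ℕ} (a b : E n) (i : Fin n) : (a + b) i = a i + b i := rfl

/-- Vector form of diminishing returns, by induction over coordinates. -/
lemma vecDR {n : ℕ} (ub : E n) (f : E n → ℝ) (hDR : DRSubmodular ub f)
    (a b w : E n) (ha : inBox ub a) (hab : ∀ i, a i ≤ b i)
    (hw : ∀ i, 0 ≤ w i) (hbw : inBox ub (b + w)) :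
    f (a + w) - f a ≥ f (b + w) - f b := by
  have hsum : ∀ i, b i + w i ≤ ub i := fun i => by
    have := (hbw i).2; rwa [add_apply'] at this
  have hb : inBox ub b := fun i => ⟨le_trans (ha i).1 (hab i),
    by have := hsum i; have := hw i; linarith⟩
  have hboxS : ∀ (c : E n), inBox ub c → (∀ i, c i ≤ b i) →
      ∀ S : Finset (Fin n), inBox ub (c + mask S w) := by
    intro c hc hcb S i
    rw [add_apply', mask_apply]
    by_cases h : i ∈ S <;> simp only [h, if_true, if_false]
    · exact ⟨by have := (hc i).1; have := hw i; linarith,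
        by have := hcb i; have := hsum i; linarith⟩
    · rw [add_zero]; exact hc i
  have key : ∀ S : Finset (Fin n),
      f (a + mask S w) - f a ≥ f (b + mask S w) - f b := by
    intro S
    induction S using Finset.induction_on with
    | empty =>
        have h0 : mask (∅ : Finset (Fin n)) w = (0 : E n) := by
          ext i; rw [mask_apply]; simp
        rw [h0, add_zero, add_zero]
        simp
    | @insert j S hj ih =>
        have heq : ∀ (c : E n),
            c + mask (insert j S) w
              = (c + mask S w) + (w j) • EuclideanSpace.single j (1 : ℝ) := by
          intro c
          ext i
          rw [add_apply', add_apply', add_apply', mask_apply, mask_apply]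
          have hs : ((w j) • EuclideanSpace.single j (1 : ℝ)) i
              = w j * (EuclideanSpace.single j (1:ℝ)) i := rfl
          rw [hs, EuclideanSpace.single_apply]
          by_cases h : i = j
          · subst h; simp [hj]
          · by_cases h2 : i ∈ S <;> simp [h, h2]
        have hawS := hboxS a ha hab S
        have hbwS := hboxS b hb (fun i => le_refl _) S
        have habS : ∀ i, (a + mask S w) i ≤ (b + mask S w) i := by
          intro i; rw [add_apply', add_apply']
          have := hab i; linarith
        have hbox_ains := hboxS a ha hab (insert j S)
        have hbox_bins := hboxS b hb (fun i => le_refl _) (insert j S)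
        rw [heq a] at hbox_ains
        rw [heq b] at hbox_bins
        have step := hDR (a + mask S w) (b + mask S w) hawS hbwS habS j (w j) (hw j)
          hbox_ains hbox_bins
        rw [heq a, heq b]
        linarith [step, ih]
  have h := key Finset.univ
  have huniv : mask (Finset.univ : Finset (Fin n)) w = w := by
    ext i; rw [mask_apply]; simp
  rwa [huniv] at h

/-- Claim 1, with `z* := x ∨ x* − x`. -/
theorem stmt2 {n : ℕ} (hn : 1 ≤ n) (ub : E n) (hub : ∀ i, 0 < ub i)
    (f : E n → ℝ) (hDR : DRSubmodular ub f)
    (hnn : ∀ w, inBox ub w → 0 ≤ f w)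
    (x xs z : E n) (hx : inBox ub x) (hxs : inBox ub xs)
    (hz : ∀ i, 0 ≤ z i ∧ z i ≤ ub i - x i) :
    f (vsup x xs) + f (vinf x xs) +
      f (vsup z (vsup x xs - x)) + f (vinf z (vsup x xs - x)) ≥ f xs := by
  set zs : E n := vsup x xs - x with hzs
  have hzs_apply : ∀ i, zs i = max (x i) (xs i) - x i := fun i => rfl
  have hzs_nn : ∀ i, 0 ≤ zs i := by
    intro i; rw [hzs_apply]
    have := le_max_left (x i) (xs i); linarith
  have hzs_le : ∀ i, zs i ≤ ub i - x i := by
    intro i; rw [hzs_apply]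
    have := max_le (hx i).2 (hxs i).2; linarith
  have hzs_box : inBox ub zs := fun i => ⟨hzs_nn i,
    by have := hzs_le i; have := (hx i).1; linarith⟩
  have hvinf_box : inBox ub (vinf x xs) := fun i =>
    ⟨le_min (hx i).1 (hxs i).1, le_trans (min_le_left _ _) (hx i).2⟩
  -- Step 1: f xs ≤ f zs + f (vinf x xs)   (subadditivity, base 0)
  have h0box : inBox ub (0 : E n) := fun i => ⟨le_refl _, le_of_lt (hub i)⟩
  have heq1 : vinf x xs + zs = xs := by
    ext i
    rw [add_apply', hzs_apply]
    show min (x i) (xs i) + (max (x i) (xs i) - x i) = xs i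
    have := min_add_max (x i) (xs i); linarith
  have step1 := vecDR ub f hDR 0 (vinf x xs) zs h0box
    (fun i => (hvinf_box i).1) hzs_nn (by rw [heq1]; exact hxs)
  rw [heq1, zero_add] at step1
  -- Step 2: f zs ≤ f (vsup z zs) + f (vsup x xs)
  set v : E n := vsup z zs - zs with hv
  have hv_apply : ∀ i, v i = max (z i) (zs i) - zs i := fun i => rfl
  have hv_nn : ∀ i, 0 ≤ v i := by
    intro i; rw [hv_apply]
    have := le_max_right (z i) (zs i); linarith
  have heq2a : zs + v = vsup z zs := by
    ext i; rw [add_apply', hv_apply]; ring_nf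
    show max (z i) (zs i) = vsup z zs i
    rfl
  have heq2b : ∀ i, (vsup x xs + v) i = x i + max (z i) (zs i) := by
    intro i
    show max (x i) (xs i) + (max (z i) (zs i) - zs i) = x i + max (z i) (zs i)
    rw [hzs_apply i]
    ring
  have hzs_le_sup : ∀ i, zs i ≤ vsup x xs i := by
    intro i; rw [hzs_apply]
    show _ ≤ max (x i) (xs i)
    have := (hx i).1; linarith
  have hsupv_box : inBox ub (vsup x xs + v) := by
    intro i
    rw [heq2b i]
    constructor
    · have := (hx i).1; have := (hz i).1; have := hzs_nn i
      have := le_max_left (z i) (zs i); linarith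
    · have h1 : max (z i) (zs i) ≤ ub i - x i := max_le (hz i).2 (hzs_le i)
      linarith
  have step2 := vecDR ub f hDR zs (vsup x xs) v hzs_box hzs_le_sup hv_nn hsupv_box
  rw [heq2a] at step2
  -- nonnegativity facts
  have hzsup_box : inBox ub (vsup z zs) := by
    intro i
    have h1 : max (z i) (zs i) ≤ ub i - x i := max_le (hz i).2 (hzs_le i)
    have := (hx i).1
    exact ⟨le_trans (hz i).1 (le_max_left _ _), by
      show max (z i) (zs i) ≤ ub i; linarith⟩
  have hzinf_box : inBox ub (vinf z zs) := by
    intro i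
    have := (hx i).1
    refine ⟨le_min (hz i).1 (hzs_nn i), ?_⟩
    show min (z i) (zs i) ≤ ub i
    have := min_le_left (z i) (zs i); have := (hz i).2; linarith
  have h1 := hnn _ hzsup_box
  have h2 := hnn _ hzinf_box
  have h3 := hnn _ h0box
  have h4 := hnn _ hsupv_box
  linarith
end
end

section
/- (Lemma 2, growth bound for the non-monotone Frank-Wolfe iterates) Let γ ∈ (0,1] and let x⁽ᵏ⁾, v⁽ᵏ⁾ be sequences in ℝⁿ with x⁽⁰⁾ = 0, x⁽ᵏ⁺¹⁾ = x⁽ᵏ⁾ + γ·v⁽ᵏ⁾, and 0 ≤ v⁽ᵏ⁾ ≤ ū − x⁽ᵏ⁾ for all k ≥ 0. Then for every k ≥ 0 and every coordinate i ∈ [n]: x⁽ᵏ⁾ᵢ ≤ ūᵢ·(1 − (1 − γ)ᵏ). -/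
noncomputable section

/-- Lemma 2: growth bound for the non-monotone Frank-Wolfe iterates. -/
theorem stmt5 {n : ℕ} (hn : 1 ≤ n) (ub : E n) (hub : ∀ i, 0 < ub i)
    (γ : ℝ) (hγ0 : 0 < γ) (hγ1 : γ ≤ 1)
    (x v : ℕ → E n)
    (h0 : x 0 = 0)
    (hrec : ∀ k, x (k + 1) = x k + γ • v k)
    (hv : ∀ k i, 0 ≤ v k i ∧ v k i ≤ ub i - x k i) :
    ∀ (k : ℕ) (i : Fin n), x k i ≤ ub i * (1 - (1 - γ) ^ k) := by
  intro k
  induction k with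
  | zero => intro i; simp [h0]
  | succ k ih =>
    intro i
    have hxi : x (k + 1) i = x k i + γ * v k i := by
      rw [hrec k]; simp [PiLp.add_apply, PiLp.smul_apply, smul_eq_mul]
    have hv1 := (hv k i).1
    have hv2 := (hv k i).2
    have h1γ : 0 ≤ 1 - γ := by linarith
    have key : x (k + 1) i ≤ (1 - γ) * x k i + γ * ub i := by
      rw [hxi]
      nlinarith
    calc x (k + 1) i ≤ (1 - γ) * x k i + γ * ub i := key
      _ ≤ (1 - γ) * (ub i * (1 - (1 - γ) ^ k)) + γ * ub i := by
          have := ih i; nlinarith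
      _ = ub i * (1 - (1 - γ) ^ (k + 1)) := by ring
end
end

section
/- (Lemma 3) Let f : ℝⁿ → ℝ be continuous, DR-submodular on X, and nonnegative on X. Given θ ∈ ℝⁿ with 0 < θ ≤ ū, let λ' = min_{i∈[n]} ūᵢ/θᵢ. Then for every x* ∈ X and every x with 0 ≤ x ≤ θ, one has f(x ∨ x*) ≥ (1 − 1/λ')·f(x*). -/
noncomputable section

open Filter Finset in
lemma oneD (L : ℝ) (hL : 1 ≤ L) (g : ℝ → ℝ) (hg : Continuous g)
    (hinc : ∀ s t δ : ℝ, 0 ≤ s → s ≤ t → 0 ≤ δ → t + δ ≤ L →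
      g (t + δ) - g t ≤ g (s + δ) - g s) :
    (1 - 1 / L) * g 0 + (1 / L) * g L ≤ g 1 := by
  have hL0 : (0:ℝ) < L := lt_of_lt_of_le one_pos hL
  have key : ∀ q : ℕ, 1 ≤ q →
      (⌊(q:ℝ)/L⌋₊ : ℝ) / q * (g L - g 0) ≤ g ((⌊(q:ℝ)/L⌋₊ : ℝ) * (L / q)) - g 0 := by
    intro q hq
    have hq0 : (0:ℝ) < q := by exact_mod_cast hq
    set p : ℕ := ⌊(q:ℝ)/L⌋₊ with hp
    set h : ℝ := L / q with hh
    have hh0 : 0 < h := div_pos hL0 hq0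
    have hpq : p ≤ q := by
      have h1 : ((q:ℝ)/L) ≤ q := by
        rw [div_le_iff₀ hL0]; nlinarith
      have := Nat.floor_le_floor h1
      simpa using this.trans_eq (Nat.floor_natCast q)
    set D : ℕ → ℝ := fun k => g (((k:ℝ)+1) * h) - g ((k:ℝ) * h) with hD
    have hmono : ∀ j k : ℕ, j ≤ k → k < q → D k ≤ D j := by
      intro j k hjk hkq
      have h1 : ((k:ℝ)+1) * h = (k:ℝ) * h + h := by ring
      have h2 : ((j:ℝ)+1) * h = (j:ℝ) * h + h := by ring
      rw [hD]
      simp only [h1, h2]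
      apply hinc ((j:ℝ)*h) ((k:ℝ)*h) h
      · positivity
      · have : (j:ℝ) ≤ k := by exact_mod_cast hjk
        nlinarith
      · exact hh0.le
      · have hk1 : ((k:ℝ)+1) ≤ q := by exact_mod_cast hkq
        have : ((k:ℝ)+1) * h ≤ (q:ℝ) * h := by nlinarith
        calc (k:ℝ)*h + h = ((k:ℝ)+1)*h := by ring
          _ ≤ (q:ℝ) * h := this
          _ = L := by rw [hh]; field_simp
    have tele : ∀ m : ℕ, ∑ k ∈ range m, D k = g ((m:ℝ) * h) - g 0 := by
      intro m
      have := Finset.sum_range_sub (fun k : ℕ => g ((k:ℝ) * h)) m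
      simp only [Nat.cast_zero, zero_mul] at this
      push_cast at this
      rw [hD]
      exact this
    have hSq : ∑ k ∈ range q, D k = g L - g 0 := by
      rw [tele]
      congr 2
      rw [hh]; field_simp
    have hchain : (p:ℝ) * (∑ k ∈ range q, D k) ≤ (q:ℝ) * (∑ k ∈ range p, D k) := by
      have hsplit : ∑ k ∈ range q, D k = (∑ k ∈ range p, D k) + ∑ k ∈ Ico p q, D k := by
        rw [Finset.range_eq_Ico, Finset.range_eq_Ico]
        exact (Finset.sum_Ico_consecutive _ (Nat.zero_le p) hpq).symm
      have hbound : ∀ k ∈ Ico p q, (p:ℝ) * D k ≤ ∑ j ∈ range p, D j := by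
        intro k hk
        rw [Finset.mem_Ico] at hk
        have : ∑ j ∈ range p, D k ≤ ∑ j ∈ range p, D j := by
          apply Finset.sum_le_sum
          intro j hj
          rw [Finset.mem_range] at hj
          exact hmono j k (le_of_lt (lt_of_lt_of_le hj hk.1)) hk.2
        simpa [Finset.sum_const, nsmul_eq_mul] using this
      have h2 : ∑ k ∈ Ico p q, (p:ℝ) * D k ≤ ∑ k ∈ Ico p q, (∑ j ∈ range p, D j) :=
        Finset.sum_le_sum hbound
      rw [Finset.sum_const, Nat.card_Ico, nsmul_eq_mul, ← Finset.mul_sum,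
        Nat.cast_sub hpq] at h2
      rw [hsplit, mul_add]
      nlinarith [h2]
    rw [hSq, tele p] at hchain
    rw [div_mul_eq_mul_div, div_le_iff₀ hq0]
    nlinarith [hchain]
  have t1 : Tendsto (fun q : ℕ => (⌊(q:ℝ)/L⌋₊ : ℝ) / q) atTop (nhds (1/L)) := by
    apply tendsto_of_tendsto_of_tendsto_of_le_of_le'
      (g := fun q : ℕ => 1/L - 1/(q:ℝ)) (h := fun q : ℕ => 1/L)
    · have : Tendsto (fun q : ℕ => 1/(q:ℝ)) atTop (nhds 0) :=
        tendsto_one_div_atTop_nhds_zero_nat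
      simpa using (tendsto_const_nhds (x := 1/L)).sub this
    · exact tendsto_const_nhds
    · filter_upwards [eventually_ge_atTop 1] with q hq
      have hq0 : (0:ℝ) < q := by exact_mod_cast hq
      have hfl : (q:ℝ)/L - 1 < (⌊(q:ℝ)/L⌋₊ : ℝ) := Nat.sub_one_lt_floor _
      have h1 : 1/L - 1/(q:ℝ) = ((q:ℝ)/L - 1)/q := by field_simp
      rw [h1]
      gcongr
    · filter_upwards [eventually_ge_atTop 1] with q hq
      have hq0 : (0:ℝ) < q := by exact_mod_cast hq
      have hfl : (⌊(q:ℝ)/L⌋₊ : ℝ) ≤ (q:ℝ)/L := Nat.floor_le (by positivity)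
      have h1 : (1:ℝ)/L = ((q:ℝ)/L)/q := by field_simp
      rw [h1]
      gcongr
  have t2 : Tendsto (fun q : ℕ => (⌊(q:ℝ)/L⌋₊ : ℝ) * (L / q)) atTop (nhds 1) := by
    have he : (fun q : ℕ => (⌊(q:ℝ)/L⌋₊ : ℝ) * (L / q)) =
        (fun q : ℕ => ((⌊(q:ℝ)/L⌋₊ : ℝ) / q) * L) := by
      funext q; ring
    rw [he]
    have := t1.mul_const L
    simpa [one_div, inv_mul_cancel₀ hL0.ne'] using this
  have t3 : Tendsto (fun q : ℕ => g ((⌊(q:ℝ)/L⌋₊ : ℝ) * (L / q)) - g 0) atTop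
      (nhds (g 1 - g 0)) :=
    ((hg.tendsto 1).comp t2).sub tendsto_const_nhds
  have t4 : Tendsto (fun q : ℕ => (⌊(q:ℝ)/L⌋₊ : ℝ) / q * (g L - g 0)) atTop
      (nhds (1/L * (g L - g 0))) := t1.mul_const _
  have final : 1/L * (g L - g 0) ≤ g 1 - g 0 := by
    apply le_of_tendsto_of_tendsto t4 t3
    filter_upwards [eventually_ge_atTop 1] with q hq using key q hq
  nlinarith [final]

lemma incr_le {n : ℕ} (ub : E n) (f : E n → ℝ) (hDR : DRSubmodular ub f)
    (a b w : E n) (ha : inBox ub a) (hb : inBox ub b) (hab : ∀ i, a i ≤ b i)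
    (hw : ∀ i, 0 ≤ w i) (ha' : inBox ub (a + w)) (hb' : inBox ub (b + w)) :
    f (b + w) - f b ≤ f (a + w) - f a := by
  set msk : ℕ → E n := fun j => WithLp.toLp 2 (fun i => if (i:ℕ) < j then w i else 0) with hmsk
  have hmsk_le : ∀ (j : ℕ) (i : Fin n), 0 ≤ msk j i ∧ msk j i ≤ w i := by
    intro j i
    simp only [hmsk, PiLp.toLp_apply]
    split
    · exact ⟨hw i, le_rfl⟩
    · exact ⟨le_rfl, hw i⟩
  have hboxa : ∀ j : ℕ, inBox ub (a + msk j) := by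
    intro j i
    have h1 := (hmsk_le j i).1
    have h2 := (hmsk_le j i).2
    have h3 := (ha i).1
    have h4 := (ha' i).2
    simp only [PiLp.add_apply] at h4 ⊢
    constructor <;> nlinarith
  have hboxb : ∀ j : ℕ, inBox ub (b + msk j) := by
    intro j i
    have h1 := (hmsk_le j i).1
    have h2 := (hmsk_le j i).2
    have h3 := (hb i).1
    have h4 := (hb' i).2
    simp only [PiLp.add_apply] at h4 ⊢
    constructor <;> nlinarith
  have hstep : ∀ j : ℕ, ∀ hj : j < n,
      msk (j+1) = msk j + (w ⟨j, hj⟩) • EuclideanSpace.single ⟨j, hj⟩ (1:ℝ) := by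
    intro j hj
    ext i
    simp only [hmsk, PiLp.toLp_apply, PiLp.add_apply, PiLp.smul_apply, EuclideanSpace.single_apply,
      smul_eq_mul]
    by_cases hii : i = ⟨j, hj⟩
    · subst hii
      simp [Nat.lt_irrefl]
    · have hne : (i : ℕ) ≠ j := fun hc => hii (Fin.ext hc)
      simp only [hii, if_false, mul_zero, add_zero]
      congr 1
      simp only [eq_iff_iff]
      omega
  have main : ∀ j : ℕ, j ≤ n → f (b + msk j) - f b ≤ f (a + msk j) - f a := by
    intro j
    induction j with
    | zero =>
      intro _
      have h0 : msk 0 = 0 := by ext i; simp [hmsk]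
      simp [h0]
    | succ j ih =>
      intro hj1
      have hj : j < n := hj1
      have ihh := ih (le_of_lt hj)
      set i : Fin n := ⟨j, hj⟩
      have hab' : ∀ i', (a + msk j) i' ≤ (b + msk j) i' := by
        intro i'
        simp only [PiLp.add_apply]
        exact add_le_add_left (hab i') _
      have hrwa : a + msk (j+1) = (a + msk j) + (w i) • EuclideanSpace.single i (1:ℝ) := by
        rw [hstep j hj, add_assoc]
      have hrwb : b + msk (j+1) = (b + msk j) + (w i) • EuclideanSpace.single i (1:ℝ) := by
        rw [hstep j hj, add_assoc]
      have := hDR (a + msk j) (b + msk j) (hboxa j) (hboxb j) hab' i (w i) (hw i)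
        (by rw [← hrwa]; exact hboxa (j+1)) (by rw [← hrwb]; exact hboxb (j+1))
      rw [← hrwa, ← hrwb] at this
      linarith
  have hmskn : msk n = w := by
    ext i
    simp [hmsk, i.isLt]
  have := main n le_rfl
  rwa [hmskn] at this

/-- Lemma 3, with `λ' = min_{i} ubᵢ/θᵢ`. -/
theorem stmt6 {n : ℕ} (hn : 1 ≤ n) (ub : E n) (hub : ∀ i, 0 < ub i)
    (f : E n → ℝ) (hcont : Continuous f)
    (hDR : DRSubmodular ub f)
    (hnn : ∀ w, inBox ub w → 0 ≤ f w)
    (θ : E n) (hθ : ∀ i, 0 < θ i ∧ θ i ≤ ub i)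
    (xs : E n) (hxs : inBox ub xs)
    (x : E n) (hx : ∀ i, 0 ≤ x i ∧ x i ≤ θ i) :
    f (vsup x xs) ≥ (1 - 1 / (⨅ i, ub i / θ i)) * f xs := by
  haveI : Nonempty (Fin n) := ⟨⟨0, hn⟩⟩
  set lam : ℝ := ⨅ i, ub i / θ i with hlam
  have hlam1 : 1 ≤ lam :=
    le_ciInf fun i => (one_le_div (hθ i).1).mpr (hθ i).2
  have hlam0 : 0 < lam := lt_of_lt_of_le one_pos hlam1
  have hlam_le : ∀ i, lam * θ i ≤ ub i := by
    intro i
    have h1 : lam ≤ ub i / θ i := ciInf_le (Set.Finite.bddBelow (Set.finite_range _)) i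
    rw [le_div_iff₀ (hθ i).1] at h1
    exact h1
  set v : E n := vsup x xs - xs with hv
  have hvapp : ∀ i, v i = max (x i) (xs i) - xs i := by
    intro i; simp [hv, vsup]
  have hv0 : ∀ i, 0 ≤ v i := by
    intro i; rw [hvapp i]; simp
  have hbox : ∀ t : ℝ, 0 ≤ t → t ≤ lam → inBox ub (xs + t • v) := by
    intro t ht0 htlam i
    have hva := hvapp i
    have hxsi := hxs i
    have hxi := hx i
    have hθi := hθ i
    have hlami := hlam_le i
    simp only [PiLp.add_apply, PiLp.smul_apply, smul_eq_mul]
    constructor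
    · have := hv0 i
      nlinarith
    · by_cases hc : x i ≤ xs i
      · have : v i = 0 := by rw [hva, max_eq_right hc]; ring
        rw [this]
        simpa using hxsi.2
      · push_neg at hc
        have hvi : v i = x i - xs i := by rw [hva, max_eq_left hc.le]
        have h1 : t * v i ≤ lam * v i := by
          have := hv0 i
          nlinarith
        have h2 : xs i + lam * v i ≤ ub i := by
          rw [hvi]
          nlinarith [hxsi.1, hxi.2, hθi.1]
        linarith
  set g : ℝ → ℝ := fun t => f (xs + t • v) with hg
  have hgc : Continuous g := by
    apply hcont.comp
    exact continuous_const.add (continuous_id.smul continuous_const)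
  have hinc : ∀ s t δ : ℝ, 0 ≤ s → s ≤ t → 0 ≤ δ → t + δ ≤ lam →
      g (t + δ) - g t ≤ g (s + δ) - g s := by
    intro s t δ hs hst hδ htd
    have ht : t ≤ lam := by linarith
    have hsl : s ≤ lam := by linarith
    have hsd : s + δ ≤ lam := by linarith
    have hrw1 : xs + (s + δ) • v = (xs + s • v) + δ • v := by
      rw [add_smul, add_assoc]
    have hrw2 : xs + (t + δ) • v = (xs + t • v) + δ • v := by
      rw [add_smul, add_assoc]
    have hab : ∀ i, (xs + s • v) i ≤ (xs + t • v) i := by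
      intro i
      simp only [PiLp.add_apply, PiLp.smul_apply, smul_eq_mul]
      have := hv0 i
      nlinarith
    have hw : ∀ i, 0 ≤ (δ • v) i := by
      intro i
      simp only [PiLp.smul_apply, smul_eq_mul]
      exact mul_nonneg hδ (hv0 i)
    have := incr_le ub f hDR (xs + s • v) (xs + t • v) (δ • v)
      (hbox s hs hsl) (hbox t (le_trans hs hst) ht) hab hw
      (by rw [← hrw1]; exact hbox _ (by linarith) hsd)
      (by rw [← hrw2]; exact hbox _ (by linarith) htd)
    rw [← hrw1, ← hrw2] at this
    exact this
  have hmain := oneD lam hlam1 g hgc hinc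
  have hg0 : g 0 = f xs := by simp [hg]
  have hg1 : g 1 = f (vsup x xs) := by
    have : xs + (1:ℝ) • v = vsup x xs := by
      rw [one_smul, hv]
      abel
    rw [hg]
    simp only [this]
  have hglam : 0 ≤ g lam := hnn _ (hbox lam hlam0.le le_rfl)
  have hpos : 0 < 1 / lam := by positivity
  rw [hg0, hg1] at hmain
  have : 0 ≤ (1 / lam) * g lam := mul_nonneg hpos.le hglam
  linarith
end
end

section
/- (Claim 3.1, per-iteration progress of the non-monotone Frank-Wolfe variant) Let P ⊆ X be a nonempty compact down-closed convex set with diameter at most D (i.e. ‖x − y‖ ≤ D for all x, y ∈ P); let f : ℝⁿ → ℝ be nonnegative on X, DR-submodular on X, and differentiable on X with L-Lipschitz gradient; let x* be a maximizer of f over P. Run the non-monotone Frank-Wolfe variant with uniform step size γ ∈ (0,1]. Then for every k ≥ 0: f(x⁽ᵏ⁺¹⁾) ≥ (1 − γ)·f(x⁽ᵏ⁾) + γ·(1 − γ)ᵏ·f(x*) − (L·D²/2)·γ². -/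
open scoped RealInnerProductSpace
open Filter Set Topology

noncomputable section

/-- a set is down-closed. -/
def DownClosed {n : ℕ} (P : Set (E n)) : Prop :=
  ∀ x ∈ P, ∀ y : E n, (∀ i, 0 ≤ y i) → (∀ i, y i ≤ x i) → y ∈ P

lemma hasDerivAt_line {n : ℕ} (f : E n → ℝ) (c d : E n) (t0 : ℝ)
    (hd : DifferentiableAt ℝ f (c + t0 • d)) :
    HasDerivAt (fun t : ℝ => f (c + t • d)) ⟪d, gradient f (c + t0 • d)⟫ t0 := by
  have h1 : HasDerivAt (fun t : ℝ => c + t • d) d t0 := by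
    simpa using ((hasDerivAt_id t0).smul_const d).const_add c
  have h2 := hd.hasGradientAt.hasFDerivAt.comp_hasDerivAt t0 h1
  have h3 : (fun t : ℝ => f (c + t • d)) = f ∘ (fun t : ℝ => c + t • d) := rfl
  rw [h3, real_inner_comm]
  simpa [InnerProductSpace.toDual_apply_apply] using h2

lemma single_box_apply {n : ℕ} (c : E n) (t : ℝ) (i j : Fin n) :
    (c + t • EuclideanSpace.single i (1:ℝ)) j = c j + (if j = i then t else 0) := by
  by_cases h : j = i <;> simp [EuclideanSpace.single_apply, h]

lemma inBox_single_shift {n : ℕ} {ub c : E n} (hc : inBox ub c) {t : ℝ} {i : Fin n}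
    (h0 : 0 ≤ c i + t) (h1 : c i + t ≤ ub i) :
    inBox ub (c + t • EuclideanSpace.single i (1:ℝ)) := by
  intro j
  rw [single_box_apply]
  by_cases h : j = i
  · subst h; simpa using ⟨h0, h1⟩
  · simpa [h] using hc j

lemma slope_tendsto_line {n : ℕ} (f : E n → ℝ) (c : E n) (i : Fin n)
    (hd : DifferentiableAt ℝ f c) :
    Tendsto (slope (fun t : ℝ => f (c + t • EuclideanSpace.single i (1:ℝ))) 0)
      (𝓝[≠] (0:ℝ)) (𝓝 (gradient f c i)) := by
  have h := hasDerivAt_line f c (EuclideanSpace.single i (1:ℝ)) 0 (by simpa using hd)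
  rw [hasDerivAt_iff_tendsto_slope] at h
  have he : ⟪EuclideanSpace.single i (1:ℝ),
      gradient f (c + (0:ℝ) • EuclideanSpace.single i (1:ℝ))⟫ = gradient f c i := by
    rw [zero_smul, add_zero, EuclideanSpace.inner_single_left, map_one, one_mul]
  rwa [he] at h

lemma grad_coord_anti {n : ℕ} {ub : E n} (hub : ∀ i, 0 < ub i) {f : E n → ℝ}
    (hDR : DRSubmodular ub f) (hdiff : ∀ w, inBox ub w → DifferentiableAt ℝ f w)
    {a b : E n} (ha : inBox ub a) (hb : inBox ub b) (hab : ∀ i, a i ≤ b i) (i : Fin n) :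
    gradient f b i ≤ gradient f a i := by
  have Ta := slope_tendsto_line f a i (hdiff a ha)
  have Tb := slope_tendsto_line f b i (hdiff b hb)
  have hpos_le : 𝓝[>] (0:ℝ) ≤ 𝓝[≠] (0:ℝ) :=
    nhdsWithin_mono 0 (fun t ht => ne_of_gt ht)
  have hneg_le : 𝓝[<] (0:ℝ) ≤ 𝓝[≠] (0:ℝ) :=
    nhdsWithin_mono 0 (fun t ht => ne_of_lt ht)
  rcases lt_or_eq_of_le (hb i).2 with hbi | hbi
  · -- b i < ub i : forward differences
    refine le_of_tendsto_of_tendsto (Tb.mono_left hpos_le) (Ta.mono_left hpos_le) ?_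
    filter_upwards [Ioo_mem_nhdsGT_of_mem (by constructor <;> [rfl; exact sub_pos.2 hbi] :
      (0:ℝ) ∈ Ico 0 (ub i - b i))] with t ht
    have ht0 : (0:ℝ) < t := ht.1
    have h1 : (0:ℝ) ≤ a i + t := by linarith [(ha i).1]
    have h2 : a i + t ≤ ub i := by linarith [hab i, ht.2]
    have h3 : (0:ℝ) ≤ b i + t := by linarith [(hb i).1]
    have h4 : b i + t ≤ ub i := by linarith [ht.2]
    have key := hDR a b ha hb hab i t ht0.le
      (inBox_single_shift ha h1 h2) (inBox_single_shift hb h3 h4)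
    simp only [slope_def_field, sub_zero, zero_smul, add_zero]
    rw [div_le_div_iff_of_pos_right ht0]
    linarith [key]
  · -- b i = ub i
    rcases eq_or_lt_of_le (ha i).1 with hai | hai
    · -- a i = 0 : forward at a, backward at b
      have hnegmap : Tendsto (fun t : ℝ => -t) (𝓝[>] (0:ℝ)) (𝓝[≠] (0:ℝ)) := by
        refine tendsto_nhdsWithin_of_tendsto_nhds_of_eventually_within _ ?_ ?_
        · have h1 : Tendsto (fun t : ℝ => -t) (𝓝 (0:ℝ)) (𝓝 (-(0:ℝ))) :=
            continuous_neg.tendsto (0:ℝ)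
          simpa using h1.mono_left nhdsWithin_le_nhds
        · filter_upwards [self_mem_nhdsWithin] with t (ht : (0:ℝ) < t)
          simp only [mem_compl_iff, mem_singleton_iff]
          exact ne_of_lt (neg_lt_zero.2 ht)
      have Tb' : Tendsto
          (fun t : ℝ => slope (fun u : ℝ => f (b + u • EuclideanSpace.single i (1:ℝ))) 0 (-t))
          (𝓝[>] (0:ℝ)) (𝓝 (gradient f b i)) := Tb.comp hnegmap
      refine le_of_tendsto_of_tendsto Tb' (Ta.mono_left hpos_le) ?_
      filter_upwards [Ioo_mem_nhdsGT_of_mem (by constructor <;> [rfl; exact hub i] :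
        (0:ℝ) ∈ Ico 0 (ub i))] with t ht
      have ht0 : (0:ℝ) < t := ht.1
      have h3 : (0:ℝ) ≤ b i + -t := by rw [hbi]; linarith [ht.2]
      have h4 : b i + -t ≤ ub i := by linarith [(hb i).2, ht0]
      have hbt : inBox ub (b + (-t) • EuclideanSpace.single i (1:ℝ)) :=
        inBox_single_shift hb h3 h4
      have hrw : b + (-t) • EuclideanSpace.single i (1:ℝ) + t • EuclideanSpace.single i (1:ℝ)
          = b := by rw [add_assoc, ← add_smul]; simp
      have habt : ∀ j, a j ≤ (b + (-t) • EuclideanSpace.single i (1:ℝ)) j := by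
        intro j; rw [single_box_apply]
        by_cases h : j = i
        · subst h; simp only [eq_self_iff_true, if_true]; rw [← hai, hbi]; linarith [ht.2]
        · simp only [if_neg h, add_zero]; exact hab j
      have h1 : (0:ℝ) ≤ a i + t := by rw [← hai]; linarith
      have h2 : a i + t ≤ ub i := by rw [← hai]; linarith [ht.2]
      have key := hDR a (b + (-t) • EuclideanSpace.single i (1:ℝ)) ha hbt habt i t ht0.le
        (inBox_single_shift ha h1 h2) (by rw [hrw]; exact hb)
      rw [hrw] at key
      simp only [slope_def_field, sub_zero, zero_smul, add_zero]
      rw [show (f (b + (-t) • EuclideanSpace.single i (1:ℝ)) - f b) / (-t)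
          = (f b - f (b + (-t) • EuclideanSpace.single i (1:ℝ))) / t by
        rw [div_neg, ← neg_div, neg_sub]]
      rw [div_le_div_iff_of_pos_right ht0]
      linarith [key]
    · -- 0 < a i : backward at both
      refine le_of_tendsto_of_tendsto (Tb.mono_left hneg_le) (Ta.mono_left hneg_le) ?_
      filter_upwards [Ioo_mem_nhdsLT_of_mem (by constructor <;> [exact neg_lt_zero.2 hai; rfl] :
        (0:ℝ) ∈ Ioc (-(a i)) 0)] with t ht
      have ht0 : t < 0 := ht.2
      have hta : inBox ub (a + t • EuclideanSpace.single i (1:ℝ)) :=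
        inBox_single_shift ha (by linarith [ht.1]) (by linarith [(ha i).2])
      have htb : inBox ub (b + t • EuclideanSpace.single i (1:ℝ)) :=
        inBox_single_shift hb (by linarith [ht.1, hab i]) (by linarith [(hb i).2])
      have habt : ∀ j, (a + t • EuclideanSpace.single i (1:ℝ)) j
          ≤ (b + t • EuclideanSpace.single i (1:ℝ)) j := by
        intro j; rw [single_box_apply, single_box_apply]
        have := hab j; by_cases h : j = i <;> simp [h] at this ⊢ <;> linarith
      have hrwa : a + t • EuclideanSpace.single i (1:ℝ) + (-t) • EuclideanSpace.single i (1:ℝ)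
          = a := by rw [add_assoc, ← add_smul]; simp
      have hrwb : b + t • EuclideanSpace.single i (1:ℝ) + (-t) • EuclideanSpace.single i (1:ℝ)
          = b := by rw [add_assoc, ← add_smul]; simp
      have key := hDR _ _ hta htb habt i (-t) (by linarith)
        (by rw [hrwa]; exact ha) (by rw [hrwb]; exact hb)
      rw [hrwa, hrwb] at key
      simp only [slope_def_field, sub_zero, zero_smul, add_zero]
      rw [div_le_div_right_of_neg ht0]
      linarith [key]

lemma inner_grad_anti {n : ℕ} {ub : E n} (hub : ∀ i, 0 < ub i) {f : E n → ℝ}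
    (hDR : DRSubmodular ub f) (hdiff : ∀ w, inBox ub w → DifferentiableAt ℝ f w)
    {q a b : E n} (hq : ∀ i, 0 ≤ q i)
    (ha : inBox ub a) (hb : inBox ub b) (hab : ∀ i, a i ≤ b i) :
    ⟪q, gradient f b⟫ ≤ ⟪q, gradient f a⟫ := by
  simp only [PiLp.inner_apply, RCLike.inner_apply, conj_trivial]
  refine Finset.sum_le_sum fun i _ => ?_
  exact mul_le_mul_of_nonneg_right (grad_coord_anti hub hDR hdiff ha hb hab i) (hq i)

lemma segment_in_box {n : ℕ} {ub x d : E n} (hx : inBox ub x) (hxd : inBox ub (x + d))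
    {t : ℝ} (ht0 : 0 ≤ t) (ht1 : t ≤ 1) : inBox ub (x + t • d) := by
  intro i
  have h1 := (hx i).1; have h2 := (hx i).2
  have h3 := (hxd i).1; have h4 := (hxd i).2
  simp only [PiLp.add_apply, PiLp.smul_apply, smul_eq_mul] at h3 h4 ⊢
  rcases le_or_gt 0 (d i) with hd | hd
  · constructor <;> nlinarith
  · constructor <;> nlinarith

lemma grad_line_contOn {n : ℕ} {ub : E n} {f : E n → ℝ} {L : ℝ}
    (hLip : ∀ a b, inBox ub a → inBox ub b →
      ‖gradient f a - gradient f b‖ ≤ L * ‖a - b‖)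
    {x d : E n} (hx : inBox ub x) (hxd : inBox ub (x + d)) :
    ContinuousOn (fun t : ℝ => ⟪d, gradient f (x + t • d)⟫) (Icc (0:ℝ) 1) := by
  have hlip : LipschitzOnWith ((L * ‖d‖).toNNReal)
      (fun t : ℝ => gradient f (x + t • d)) (Icc (0:ℝ) 1) := by
    refine LipschitzOnWith.of_dist_le_mul fun s hs t ht => ?_
    have h1 : ‖gradient f (x + s • d) - gradient f (x + t • d)‖
        ≤ L * ‖(x + s • d) - (x + t • d)‖ :=
      hLip _ _ (segment_in_box hx hxd hs.1 hs.2) (segment_in_box hx hxd ht.1 ht.2)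
    have h2 : (x + s • d) - (x + t • d) = (s - t) • d := by
      rw [add_sub_add_left_eq_sub, ← sub_smul]
    rw [h2] at h1
    rw [dist_eq_norm, dist_eq_norm]
    calc ‖gradient f (x + s • d) - gradient f (x + t • d)‖
        ≤ L * ‖(s - t) • d‖ := h1
      _ = L * ‖d‖ * ‖s - t‖ := by rw [norm_smul]; simp [Real.norm_eq_abs]; ring
      _ ≤ (L * ‖d‖).toNNReal * ‖s - t‖ :=
          mul_le_mul_of_nonneg_right (Real.le_coe_toNNReal _) (norm_nonneg _)
  exact Continuous.comp_continuousOn (continuous_const.inner continuous_id)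
    hlip.continuousOn |>.congr fun t ht => rfl

lemma ftc_line {n : ℕ} {ub : E n} {f : E n → ℝ} {L : ℝ}
    (hdiff : ∀ w, inBox ub w → DifferentiableAt ℝ f w)
    (hLip : ∀ a b, inBox ub a → inBox ub b →
      ‖gradient f a - gradient f b‖ ≤ L * ‖a - b‖)
    {x d : E n} (hx : inBox ub x) (hxd : inBox ub (x + d)) :
    f (x + d) - f x = ∫ t in (0:ℝ)..1, ⟪d, gradient f (x + t • d)⟫ := by
  have heq := intervalIntegral.integral_eq_sub_of_hasDerivAt
    (f := fun t : ℝ => f (x + t • d))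
    (f' := fun t : ℝ => ⟪d, gradient f (x + t • d)⟫) (a := 0) (b := 1)
    (fun t ht => by
      rw [uIcc_of_le zero_le_one] at ht
      exact hasDerivAt_line f x d t (hdiff _ (segment_in_box hx hxd ht.1 ht.2)))
    (by
      apply ContinuousOn.intervalIntegrable
      rw [uIcc_of_le zero_le_one]
      exact grad_line_contOn hLip hx hxd)
  rw [heq]; simp

lemma smooth_lb {n : ℕ} {ub : E n} {f : E n → ℝ} {L : ℝ}
    (hdiff : ∀ w, inBox ub w → DifferentiableAt ℝ f w)
    (hLip : ∀ a b, inBox ub a → inBox ub b →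
      ‖gradient f a - gradient f b‖ ≤ L * ‖a - b‖)
    {x d : E n} (hx : inBox ub x) (hxd : inBox ub (x + d)) :
    f x + ⟪d, gradient f x⟫ - L / 2 * ‖d‖ ^ 2 ≤ f (x + d) := by
  have hftc := ftc_line hdiff hLip hx hxd
  have hpt : ∀ t ∈ Icc (0:ℝ) 1,
      ⟪d, gradient f x⟫ - L * ‖d‖ ^ 2 * t ≤ ⟪d, gradient f (x + t • d)⟫ := by
    intro t ht
    have hbox := segment_in_box hx hxd ht.1 ht.2
    have h1 : ‖gradient f (x + t • d) - gradient f x‖ ≤ L * (t * ‖d‖) := by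
      have := hLip _ _ hbox hx
      simpa [norm_smul, abs_of_nonneg ht.1] using this
    have h2 : |⟪d, gradient f (x + t • d) - gradient f x⟫| ≤ L * (t * ‖d‖) * ‖d‖ := by
      calc |⟪d, gradient f (x + t • d) - gradient f x⟫|
          ≤ ‖d‖ * ‖gradient f (x + t • d) - gradient f x‖ := abs_real_inner_le_norm _ _
        _ ≤ ‖d‖ * (L * (t * ‖d‖)) := by
            exact mul_le_mul_of_nonneg_left h1 (norm_nonneg _)
        _ = L * (t * ‖d‖) * ‖d‖ := by ring
    have h3 : ⟪d, gradient f (x + t • d)⟫ - ⟪d, gradient f x⟫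
        = ⟪d, gradient f (x + t • d) - gradient f x⟫ := by
      rw [inner_sub_right]
    have h4 := neg_abs_le ⟪d, gradient f (x + t • d) - gradient f x⟫
    nlinarith [h2, h4, h3]
  have hco : ContinuousOn (fun t : ℝ => ⟪d, gradient f (x + t • d)⟫) (uIcc (0:ℝ) 1) := by
    rw [uIcc_of_le zero_le_one]; exact grad_line_contOn hLip hx hxd
  have hi2 : IntervalIntegrable (fun t : ℝ => L * ‖d‖ ^ 2 * t) MeasureTheory.volume 0 1 :=
    (continuous_const.mul continuous_id').intervalIntegrable 0 1
  have hint : ∫ t in (0:ℝ)..1, (⟪d, gradient f x⟫ - L * ‖d‖ ^ 2 * t)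
      ≤ ∫ t in (0:ℝ)..1, ⟪d, gradient f (x + t • d)⟫ := by
    apply intervalIntegral.integral_mono_on zero_le_one
    · exact intervalIntegrable_const.sub hi2
    · exact hco.intervalIntegrable
    · exact hpt
  have hval : ∫ t in (0:ℝ)..1, (⟪d, gradient f x⟫ - L * ‖d‖ ^ 2 * t)
      = ⟪d, gradient f x⟫ - L / 2 * ‖d‖ ^ 2 := by
    rw [intervalIntegral.integral_sub intervalIntegrable_const hi2,
      intervalIntegral.integral_const_mul]
    simp [integral_id]
    ring
  linarith [hftc, hint, hval.symm.le, hval.le]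

lemma grad_ub {n : ℕ} {ub : E n} (hub : ∀ i, 0 < ub i) {f : E n → ℝ} {L : ℝ}
    (hDR : DRSubmodular ub f)
    (hdiff : ∀ w, inBox ub w → DifferentiableAt ℝ f w)
    (hLip : ∀ a b, inBox ub a → inBox ub b →
      ‖gradient f a - gradient f b‖ ≤ L * ‖a - b‖)
    {x w : E n} (hw : ∀ i, 0 ≤ w i) (hx : inBox ub x) (hxw : inBox ub (x + w)) :
    f (x + w) - f x ≤ ⟪w, gradient f x⟫ := by
  rw [ftc_line hdiff hLip hx hxw]
  have hint : ∫ t in (0:ℝ)..1, ⟪w, gradient f (x + t • w)⟫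
      ≤ ∫ t in (0:ℝ)..1, (⟪w, gradient f x⟫ : ℝ) := by
    apply intervalIntegral.integral_mono_on zero_le_one
    · refine ContinuousOn.intervalIntegrable ?_
      rw [uIcc_of_le zero_le_one]; exact grad_line_contOn hLip hx hxw
    · exact intervalIntegrable_const
    · intro t ht
      refine inner_grad_anti hub hDR hdiff hw hx (segment_in_box hx hxw ht.1 ht.2) ?_
      intro i
      simp only [PiLp.add_apply, PiLp.smul_apply, smul_eq_mul]
      nlinarith [hw i, ht.1]
  simpa using hint

lemma concave_bound {n : ℕ} {ub : E n} (hub : ∀ i, 0 < ub i) {f : E n → ℝ}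
    (hDR : DRSubmodular ub f)
    (hdiff : ∀ w, inBox ub w → DifferentiableAt ℝ f w)
    {c q : E n} {T : ℝ} (hq : ∀ i, 0 ≤ q i) (hT : 1 ≤ T)
    (hc : inBox ub c) (hcq : inBox ub (c + T • q)) :
    (1 - 1 / T) * f c + (1 / T) * f (c + T • q) ≤ f (c + q) := by
  have hT0 : (0:ℝ) < T := lt_of_lt_of_le one_pos hT
  have hseg : ∀ t ∈ Icc (0:ℝ) T, inBox ub (c + t • q) := by
    intro t ht
    have := segment_in_box hc hcq (t := t / T) (div_nonneg ht.1 hT0.le)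
      ((div_le_one hT0).2 ht.2)
    rwa [smul_smul, div_mul_cancel₀ _ hT0.ne'] at this
  set g : ℝ → ℝ := fun t => f (c + t • q) with hg
  have hderiv : ∀ t ∈ Icc (0:ℝ) T, HasDerivAt g ⟪q, gradient f (c + t • q)⟫ t :=
    fun t ht => hasDerivAt_line f c q t (hdiff _ (hseg t ht))
  have hconc : ConcaveOn ℝ (Icc (0:ℝ) T) g := by
    refine AntitoneOn.concaveOn_of_deriv (convex_Icc 0 T) ?_ ?_ ?_
    · intro t ht
      exact ((hderiv t ht).continuousAt).continuousWithinAt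
    · rw [interior_Icc]
      intro t ht
      exact (hderiv t ⟨ht.1.le, ht.2.le⟩).differentiableAt.differentiableWithinAt
    · rw [interior_Icc]
      intro s hs t ht hst
      rw [(hderiv s ⟨hs.1.le, hs.2.le⟩).deriv, (hderiv t ⟨ht.1.le, ht.2.le⟩).deriv]
      refine inner_grad_anti hub hDR hdiff hq (hseg s ⟨hs.1.le, hs.2.le⟩)
        (hseg t ⟨ht.1.le, ht.2.le⟩) ?_
      intro i
      simp only [PiLp.add_apply, PiLp.smul_apply, smul_eq_mul]
      nlinarith [hq i]
  have hmem0 : (0:ℝ) ∈ Icc (0:ℝ) T := ⟨le_refl _, hT0.le⟩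
  have hmemT : T ∈ Icc (0:ℝ) T := ⟨hT0.le, le_refl _⟩
  have h1 : (0:ℝ) ≤ 1 - 1 / T := by
    have : 1 / T ≤ 1 := by rw [div_le_one hT0]; exact hT
    linarith
  have h2 : (0:ℝ) ≤ 1 / T := by positivity
  have h3 : (1 - 1 / T) + 1 / T = 1 := by ring
  have := hconc.2 hmem0 hmemT h1 h2 h3
  have heq : (1 - 1 / T) • (0:ℝ) + (1 / T) • T = 1 := by
    field_simp
    simp [hT0.ne']
  rw [heq] at this
  have hg0 : g 0 = f c := by simp [hg]
  have hgT : g T = f (c + T • q) := by simp [hg]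
  have hg1 : g 1 = f (c + q) := by simp [hg]
  rw [hg0, hgT, hg1] at this
  simpa [smul_eq_mul] using this

lemma union_bound {n : ℕ} {ub : E n} (hub : ∀ i, 0 < ub i) {f : E n → ℝ}
    (hDR : DRSubmodular ub f)
    (hdiff : ∀ w, inBox ub w → DifferentiableAt ℝ f w)
    (hnn : ∀ w, inBox ub w → 0 ≤ f w)
    {xk xs : E n} (hxkb : inBox ub xk) (hxsb : inBox ub xs)
    {c : ℝ} (hc0 : 0 ≤ c) (hc1 : c ≤ 1) (hinv : ∀ i, xk i ≤ (1 - c) * ub i)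
    (z : E n) (hz : ∀ i, z i = max (xs i) (xk i)) :
    c * f xs ≤ f z := by
  by_cases hθ : 1 - c = 0
  · -- c = 1 : xk = 0 and z = xs
    have hxk0 : ∀ i, xk i = 0 := by
      intro i
      have h2 := hinv i
      rw [hθ, zero_mul] at h2
      exact le_antisymm h2 (hxkb i).1
    have hzeq : z = xs := by
      ext i
      rw [hz i, hxk0 i, max_eq_left (hxsb i).1]
    rw [hzeq]
    nlinarith [hnn xs hxsb]
  · have hθ0 : 0 < 1 - c := lt_of_le_of_ne (by linarith) (Ne.symm hθ)
    set θ := 1 - c with hθdef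
    set T : ℝ := 1/θ with hTdef
    have hT1 : 1 ≤ T := by rw [hTdef, le_div_iff₀ hθ0]; linarith
    have hT0 : 0 < T := lt_of_lt_of_le one_pos hT1
    have hTθ : T * θ = 1 := by rw [hTdef]; field_simp
    set q : E n := WithLp.toLp 2 (fun i => max (xs i) (xk i) - xs i) with hqdef
    have hq0 : ∀ i, 0 ≤ q i := fun i => by
      simp only [hqdef, PiLp.toLp_apply]; exact sub_nonneg.2 (le_max_left _ _)
    have hTq : inBox ub (xs + T • q) := by
      intro i
      simp only [PiLp.add_apply, PiLp.smul_apply, smul_eq_mul, hqdef, PiLp.toLp_apply]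
      have h1 := (hxsb i).1; have h2 := (hxsb i).2
      have h3 := (hxkb i).1
      have h4 : xk i ≤ θ * ub i := by rw [hθdef]; exact hinv i
      rcases max_cases (xs i) (xk i) with ⟨he, hge⟩ | ⟨he, hgt⟩ <;> rw [he]
      · constructor <;> nlinarith
      · constructor
        · nlinarith
        · nlinarith [mul_le_mul_of_nonneg_left h4 hT0.le, (hub i).le]
    have hcb := concave_bound hub hDR hdiff hq0 hT1 hxsb hTq
    have hqeq : xs + q = z := by
      ext i
      simp only [PiLp.add_apply, hqdef, hz i, PiLp.toLp_apply]
      ring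
    rw [hqeq] at hcb
    have hfT : 0 ≤ f (xs + T • q) := hnn _ hTq
    have h1T : 1/T = θ := by rw [hTdef]; field_simp
    rw [h1T] at hcb
    have hfin : (1 - θ) * f xs ≤ f z := by nlinarith [hnn xs hxsb]
    rw [hθdef] at hfin
    calc c * f xs = (1 - (1 - c)) * f xs := by ring
      _ ≤ f z := hfin

set_option maxHeartbeats 1000000 in
/-- Claim 3.1: per-iteration progress of the non-monotone Frank-Wolfe variant. -/
theorem stmt7 {n : ℕ} (hn : 1 ≤ n) (ub : E n) (hub : ∀ i, 0 < ub i)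
    (P : Set (E n)) (hPX : ∀ p ∈ P, inBox ub p) (hPne : P.Nonempty)
    (hPcp : IsCompact P) (hPcv : Convex ℝ P) (hPdc : DownClosed P)
    (D : ℝ) (hD : ∀ a ∈ P, ∀ b ∈ P, ‖a - b‖ ≤ D)
    (f : E n → ℝ) (L : ℝ)
    (hnn : ∀ w, inBox ub w → 0 ≤ f w)
    (hDR : DRSubmodular ub f)
    (hdiff : ∀ w, inBox ub w → DifferentiableAt ℝ f w)
    (hLip : ∀ a b, inBox ub a → inBox ub b →
      ‖gradient f a - gradient f b‖ ≤ L * ‖a - b‖)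
    (xs : E n) (hxs : xs ∈ P) (hmax : ∀ w ∈ P, f w ≤ f xs)
    (γ : ℝ) (hγ0 : 0 < γ) (hγ1 : γ ≤ 1)
    (x v : ℕ → E n)
    (h0 : x 0 = 0)
    (hrec : ∀ k, x (k + 1) = x k + γ • v k)
    (hvfeas : ∀ k, v k ∈ P ∧ ∀ i, v k i ≤ ub i - x k i)
    (hvopt : ∀ k, ∀ w ∈ P, (∀ i, w i ≤ ub i - x k i) →
      ⟪w, gradient f (x k)⟫ ≤ ⟪v k, gradient f (x k)⟫) :
    ∀ k : ℕ, f (x (k + 1)) ≥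
      (1 - γ) * f (x k) + γ * (1 - γ) ^ k * f xs - L * D ^ 2 / 2 * γ ^ 2 := by
  have hγ' : (0:ℝ) ≤ 1 - γ := by linarith
  have hbox0 : inBox ub 0 := fun i => by simpa using (hub i).le
  have hboxub : inBox ub ub := fun i => ⟨(hub i).le, le_refl _⟩
  -- 0 ≤ L
  have hL0 : (0:ℝ) ≤ L := by
    have h := hLip 0 ub hbox0 hboxub
    have h2 : (0:ℝ) ≤ L * ‖(0:E n) - ub‖ := le_trans (norm_nonneg _) h
    have h3 : (0:ℝ) < ‖(0:E n) - ub‖ := by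
      rw [norm_pos_iff, zero_sub, neg_ne_zero]
      intro hc
      have h4 : ub ⟨0, hn⟩ = 0 := by rw [hc]; rfl
      exact absurd h4 (hub ⟨0, hn⟩).ne'
    nlinarith
  -- 0 ∈ P
  have h0P : (0:E n) ∈ P := by
    obtain ⟨p, hp⟩ := hPne
    exact hPdc p hp 0 (fun i => by simp) (fun i => by simpa using (hPX p hp i).1)
  have hD0 : (0:ℝ) ≤ D := by simpa using hD 0 h0P 0 h0P
  -- invariant
  have hinv : ∀ k, (∀ i, 0 ≤ x k i) ∧ (∀ i, x k i ≤ (1 - (1-γ)^k) * ub i) := by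
    intro k
    induction k with
    | zero => rw [h0]; exact ⟨fun i => by simp, fun i => by simp⟩
    | succ k ih =>
      rw [hrec k]
      have hvb := hPX _ (hvfeas k).1
      have hvu := (hvfeas k).2
      constructor
      · intro i
        simp only [PiLp.add_apply, PiLp.smul_apply, smul_eq_mul]
        have := (hvb i).1
        nlinarith [(ih.1 i)]
      · intro i
        simp only [PiLp.add_apply, PiLp.smul_apply, smul_eq_mul]
        have h1 := hvu i
        have h2 := ih.2 i
        have hp0 : (0:ℝ) ≤ (1-γ)^k := pow_nonneg hγ' k
        have hps : (1-γ)^(k+1) = (1-γ)^k * (1-γ) := pow_succ _ _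
        nlinarith [(hub i).le]
  have hxbox : ∀ k, inBox ub (x k) := by
    intro k i
    refine ⟨(hinv k).1 i, le_trans ((hinv k).2 i) ?_⟩
    nlinarith [pow_nonneg hγ' k, (hub i).le]
  intro k
  have hvP := (hvfeas k).1
  have hvb := hPX _ hvP
  have hvu := (hvfeas k).2
  set g := gradient f (x k) with hgdef
  -- x(k+1) in box
  have hx1 : inBox ub (x k + γ • v k) := by
    intro i
    simp only [PiLp.add_apply, PiLp.smul_apply, smul_eq_mul]
    have h1 := (hxbox k i).1
    have h2 := (hvb i).1
    have h3 := hvu i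
    constructor
    · nlinarith
    · nlinarith
  -- smoothness lower bound
  have hsm := smooth_lb hdiff hLip (hxbox k) hx1
  -- norm bound
  have hvD : ‖v k‖ ≤ D := by simpa using hD (v k) hvP 0 h0P
  -- w = (xs ∨ x k) - x k
  set w : E n := WithLp.toLp 2 (fun i => max (xs i) (x k i) - x k i) with hwdef
  have hw0 : ∀ i, 0 ≤ w i := fun i => by
    simp only [hwdef, PiLp.toLp_apply]; exact sub_nonneg.2 (le_max_right _ _)
  have hxsb := hPX xs hxs
  have hwP : w ∈ P := by
    refine hPdc xs hxs w hw0 fun i => ?_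
    simp only [hwdef, PiLp.toLp_apply]
    have := (hxbox k i).1; have := (hxsb i).1
    rcases max_cases (xs i) (x k i) with ⟨he, _⟩ | ⟨he, _⟩ <;> rw [he] <;> linarith
  have hwub : ∀ i, w i ≤ ub i - x k i := by
    intro i
    simp only [hwdef, PiLp.toLp_apply]
    have h1 := (hxsb i).2; have h2 := (hxbox k i).2
    rcases max_cases (xs i) (x k i) with ⟨he, _⟩ | ⟨he, _⟩ <;> rw [he] <;> linarith
  have hopt := hvopt k w hwP hwub
  have hxw : inBox ub (x k + w) := by
    intro i
    simp only [PiLp.add_apply, hwdef, PiLp.toLp_apply]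
    have h1 := (hxsb i).1; have h2 := (hxsb i).2
    have h3 := (hxbox k i).1; have h4 := (hxbox k i).2
    rcases max_cases (xs i) (x k i) with ⟨he, _⟩ | ⟨he, _⟩ <;> rw [he] <;>
      constructor <;> linarith
  have hgu := grad_ub hub hDR hdiff hLip hw0 (hxbox k) hxw
  -- the union lower bound
  have hunion : (1-γ)^k * f xs ≤ f (x k + w) := by
    refine union_bound hub hDR hdiff hnn (hxbox k) hxsb
      (pow_nonneg hγ' k) (pow_le_one₀ hγ' (by linarith)) (fun i => (hinv k).2 i)
      (x k + w) (fun i => ?_)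
    simp only [PiLp.add_apply, hwdef, PiLp.toLp_apply]
    ring
  -- combine
  have hin1 : ⟪γ • v k, g⟫ = γ * ⟪v k, g⟫ := real_inner_smul_left _ _ _
  have hns : ‖γ • v k‖ ^ 2 = γ^2 * ‖v k‖^2 := by
    rw [norm_smul, Real.norm_eq_abs, abs_of_pos hγ0]; ring
  have hnD : ‖v k‖^2 ≤ D^2 := by nlinarith [norm_nonneg (v k)]
  have hkey : γ * (f (x k + w) - f (x k)) ≤ γ * ⟪v k, g⟫ :=
    mul_le_mul_of_nonneg_left (le_trans hgu hopt) hγ0.le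
  rw [hrec k]
  have hunion' : γ * ((1-γ)^k * f xs - f (x k)) ≤ γ * (f (x k + w) - f (x k)) :=
    mul_le_mul_of_nonneg_left (by linarith) hγ0.le
  have hfinal : f (x k) + ⟪γ • v k, g⟫ - L / 2 * ‖γ • v k‖ ^ 2
      ≥ (1 - γ) * f (x k) + γ * (1-γ)^k * f xs - L * D^2/2 * γ^2 := by
    rw [hin1, hns]
    have hbb : L / 2 * (γ^2 * ‖v k‖^2) ≤ L * D^2 / 2 * γ^2 := by
      have h := mul_le_mul_of_nonneg_left hnD (by positivity : (0:ℝ) ≤ L / 2 * γ^2)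
      nlinarith [h]
    linarith [hkey, hunion', hbb]
  linarith [hsm, hfinal]
end
end

section
/- (Inequality (34), used in the proof of Theorem 2) For all real numbers t ≥ 0 and γ ≥ 0 with t + γ ≤ 2, one has (1 − γ)·t·e^{−t} + γ·e^{−t} ≥ (t + γ)·e^{−(t+γ)}. -/
/-- Inequality (34), used in the proof of Theorem 2: it follows from concavity of
`t ↦ t·e^{−t}` on `[0, 2]`. -/
theorem stmt10 (t γ : ℝ) (ht : 0 ≤ t) (hγ : 0 ≤ γ) (htγ : t + γ ≤ 2) :
    (1 - γ) * t * Real.exp (-t) + γ * Real.exp (-t) ≥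
      (t + γ) * Real.exp (-(t + γ)) := by
  have hq : 1 + γ + γ ^ 2 / 2 ≤ Real.exp γ := Real.quadratic_le_exp_of_nonneg hγ
  have hqpos : (0:ℝ) < 1 + γ + γ ^ 2 / 2 := by nlinarith
  have hexp : Real.exp (-γ) ≤ 1 - γ + γ ^ 2 / 2 := by
    rw [Real.exp_neg]
    rw [inv_le_iff_one_le_mul₀ (Real.exp_pos γ)]
    have hpos : (0:ℝ) ≤ 1 - γ + γ ^ 2 / 2 := by nlinarith [sq_nonneg (γ - 1)]
    nlinarith [mul_le_mul_of_nonneg_left hq hpos]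
  have hsplit : Real.exp (-(t + γ)) = Real.exp (-t) * Real.exp (-γ) := by
    rw [← Real.exp_add]; ring_nf
  rw [hsplit]
  have het := Real.exp_pos (-t)
  nlinarith [mul_nonneg (mul_nonneg (sq_nonneg γ) het.le) (by linarith : 0 ≤ 2 - (t + γ)),
    mul_le_mul_of_nonneg_left hexp (mul_nonneg (by linarith : (0:ℝ) ≤ t + γ) het.le)]
end

section
/- (Explicit form of the estimate e^{−t} − O(γ) ≤ (1 − γ)^{t/γ} used in the proof of Theorem 2) For all real numbers γ and t with 0 < γ ≤ 1/2 and γ ≤ t ≤ 1, one has (1 − γ)^{t/γ} ≥ e^{−t} − γ. -/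
/-- Explicit form of the estimate `e^{−t} − O(γ) ≤ (1 − γ)^{t/γ}` used in the proof of
Theorem 2; the power is the real power `rpow`. -/
theorem stmt11 (γ t : ℝ) (hγ0 : 0 < γ) (hγ : γ ≤ 1 / 2) (hγt : γ ≤ t) (ht : t ≤ 1) :
    (1 - γ) ^ (t / γ) ≥ Real.exp (-t) - γ := by
  have ht0 : 0 < t := lt_of_lt_of_le hγ0 hγt
  have h1 : (0:ℝ) < 1 - γ := by linarith
  -- log (1 - γ) ≥ -(γ + 2γ²)
  have hlog : -(γ + 2*γ^2) ≤ Real.log (1 - γ) := by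
    have h3 : Real.log (1-γ)⁻¹ ≤ (1-γ)⁻¹ - 1 :=
      Real.log_le_sub_one_of_pos (by positivity)
    have hinv : (1-γ)⁻¹ * (1-γ) = 1 := inv_mul_cancel₀ h1.ne'
    have hinvpos : (0:ℝ) < (1-γ)⁻¹ := inv_pos.mpr h1
    have h4 : (1-γ)⁻¹ ≤ 1 + γ + 2*γ^2 := by nlinarith
    have h2 : Real.log (1-γ) = -Real.log (1-γ)⁻¹ := by
      rw [Real.log_inv]; ring
    rw [h2]; linarith
  rw [ge_iff_le, Real.rpow_def_of_pos h1]
  have hstep : -t - 2*t*γ ≤ Real.log (1-γ) * (t/γ) := by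
    have hm : -(γ + 2*γ^2) * (t/γ) ≤ Real.log (1-γ) * (t/γ) :=
      mul_le_mul_of_nonneg_right hlog (by positivity)
    have heq : -(γ + 2*γ^2) * (t/γ) = -t - 2*t*γ := by
      field_simp; ring
    linarith
  have hepos : (0:ℝ) < Real.exp (-t) := Real.exp_pos _
  have hte : Real.exp (-t) ≤ (1+t)⁻¹ := by
    rw [Real.exp_neg]
    exact inv_anti₀ (by linarith) (by linarith [Real.add_one_le_exp t])
  have hi : (1+t)⁻¹ * (1+t) = 1 := inv_mul_cancel₀ (by linarith)
  have hipos : (0:ℝ) < (1+t)⁻¹ := inv_pos.mpr (by linarith)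
  have stepA : Real.exp (-t) - γ ≤ Real.exp (-t) * (1 - 2*t*γ) := by
    have hiγ : γ*(1+t)⁻¹ + γ*t*(1+t)⁻¹ = γ := by
      have := hi; nlinarith [hi]
    nlinarith [mul_le_mul_of_nonneg_left hte (by positivity : (0:ℝ) ≤ 2*t*γ),
      mul_nonneg (mul_nonneg hγ0.le hipos.le) (sub_nonneg.mpr ht), hiγ]
  have stepB : Real.exp (-t) * (1 - 2*t*γ) ≤ Real.exp (-t) * Real.exp (-(2*t*γ)) := by
    have := Real.add_one_le_exp (-(2*t*γ))
    nlinarith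
  have stepC : Real.exp (-t) * Real.exp (-(2*t*γ)) = Real.exp (-t - 2*t*γ) := by
    rw [← Real.exp_add]; ring_nf
  calc Real.exp (-t) - γ ≤ Real.exp (-t) * (1 - 2*t*γ) := stepA
    _ ≤ Real.exp (-t - 2*t*γ) := by rw [← stepC]; exact stepB
    _ ≤ Real.exp (Real.log (1-γ) * (t/γ)) := Real.exp_le_exp.mpr hstep
end

section
/- (Proposition 2, characterization (a): weak DR property) Let X = {x ∈ ℝⁿ : ℓ ≤ x ≤ u} be a box with ℓ ≤ u, let α ∈ {−1, 1}ⁿ, and let f : ℝⁿ → ℝ. Then f is K_α-submodular on X if and only if f satisfies the weak DR property: for all a, b ∈ X with a ≼_α b, every coordinate i with aᵢ = bᵢ, and every k ≥ 0 such that a + k·eᵢ ∈ X and b + k·eᵢ ∈ X, one has αᵢ·(f(a + k·eᵢ) − f(a)) ≥ αᵢ·(f(b + k·eᵢ) − f(b)). -/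
noncomputable section

/-- the partial order `a ≼_α b` iff `αᵢaᵢ ≤ αᵢbᵢ` for all `i`. -/
def leA {n : ℕ} (α a b : Fin n → ℝ) : Prop := ∀ i, α i * a i ≤ α i * b i

/-- the join `(x ∨_α y)ᵢ = αᵢ·max(αᵢxᵢ, αᵢyᵢ)`. -/
def supA {n : ℕ} (α x y : Fin n → ℝ) : Fin n → ℝ :=
  fun i => α i * max (α i * x i) (α i * y i)

/-- the meet `(x ∧_α y)ᵢ = αᵢ·min(αᵢxᵢ, αᵢyᵢ)`. -/
def infA {n : ℕ} (α x y : Fin n → ℝ) : Fin n → ℝ :=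
  fun i => α i * min (α i * x i) (α i * y i)

/-- `K_α`-submodularity of `f` on a set `X`. -/
def KSubmodular {n : ℕ} (α : Fin n → ℝ) (X : Set (Fin n → ℝ))
    (f : (Fin n → ℝ) → ℝ) : Prop :=
  ∀ x ∈ X, ∀ y ∈ X, f x + f y ≥ f (supA α x y) + f (infA α x y)

/-- Proposition 2, characterization (a): `K_α`-submodularity on a box is equivalent to the
weak DR property. -/
theorem stmt12 {n : ℕ} (hn : 1 ≤ n) (l u : Fin n → ℝ) (hlu : ∀ i, l i ≤ u i)
    (α : Fin n → ℝ) (hα : ∀ i, α i = 1 ∨ α i = -1)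
    (f : (Fin n → ℝ) → ℝ) :
    KSubmodular α {x | ∀ i, l i ≤ x i ∧ x i ≤ u i} f ↔
      (∀ a ∈ {x : Fin n → ℝ | ∀ i, l i ≤ x i ∧ x i ≤ u i},
        ∀ b ∈ {x : Fin n → ℝ | ∀ i, l i ≤ x i ∧ x i ≤ u i},
        leA α a b → ∀ i, a i = b i → ∀ k : ℝ, 0 ≤ k →
        (a + k • (Pi.single i 1 : Fin n → ℝ)) ∈ {x : Fin n → ℝ | ∀ i, l i ≤ x i ∧ x i ≤ u i} →
        (b + k • (Pi.single i 1 : Fin n → ℝ)) ∈ {x : Fin n → ℝ | ∀ i, l i ≤ x i ∧ x i ≤ u i} →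
        α i * (f (a + k • (Pi.single i 1 : Fin n → ℝ)) - f a) ≥
          α i * (f (b + k • (Pi.single i 1 : Fin n → ℝ)) - f b)) := by
  have hαα : ∀ j, α j * α j = 1 := fun j => by rcases hα j with h | h <;> rw [h] <;> norm_num
  have hc : ∀ (j : Fin n) (t : ℝ), α j * (α j * t) = t := fun j t => by
    rw [← mul_assoc, hαα j, one_mul]
  constructor
  · -- submodular → weak DR
    intro hsub a ha b hb hab i hi k hk ha' hb'
    rcases hα i with hαi | hαi
    · -- α i = 1
      have h := hsub _ ha' b hb
      have hsup : supA α (a + k • (Pi.single i 1 : Fin n → ℝ)) b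
          = b + k • (Pi.single i 1 : Fin n → ℝ) := by
        funext j
        by_cases hj : j = i
        · subst hj
          simp only [supA, Pi.add_apply, Pi.smul_apply, Pi.single_eq_same, smul_eq_mul, mul_one,
            hαi, one_mul]
          rw [← hi, max_eq_left (by linarith)]
        · simp only [supA, Pi.add_apply, Pi.smul_apply, Pi.single_apply, if_neg hj, smul_eq_mul,
            mul_zero, add_zero]
          rw [max_eq_right (hab j), hc]
      have hinf : infA α (a + k • (Pi.single i 1 : Fin n → ℝ)) b = a := by
        funext j
        by_cases hj : j = i
        · subst hj
          simp only [infA, Pi.add_apply, Pi.smul_apply, Pi.single_eq_same, smul_eq_mul, mul_one,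
            hαi, one_mul]
          rw [← hi, min_eq_right (by linarith)]
        · simp only [infA, Pi.add_apply, Pi.smul_apply, Pi.single_apply, if_neg hj, smul_eq_mul,
            mul_zero, add_zero]
          rw [min_eq_left (hab j), hc]
      rw [hsup, hinf] at h
      rw [hαi]; linarith
    · -- α i = -1
      have h := hsub a ha _ hb'
      have hsup : supA α a (b + k • (Pi.single i 1 : Fin n → ℝ)) = b := by
        funext j
        by_cases hj : j = i
        · subst hj
          simp only [supA, Pi.add_apply, Pi.smul_apply, Pi.single_eq_same, smul_eq_mul, mul_one,
            hαi]
          rw [← hi, max_eq_left (by linarith), hi]; ring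
        · simp only [supA, Pi.add_apply, Pi.smul_apply, Pi.single_apply, if_neg hj, smul_eq_mul,
            mul_zero, add_zero]
          rw [max_eq_right (hab j), hc]
      have hinf : infA α a (b + k • (Pi.single i 1 : Fin n → ℝ))
          = a + k • (Pi.single i 1 : Fin n → ℝ) := by
        funext j
        by_cases hj : j = i
        · subst hj
          simp only [infA, Pi.add_apply, Pi.smul_apply, Pi.single_eq_same, smul_eq_mul, mul_one,
            hαi]
          rw [← hi, min_eq_right (by linarith)]; ring
        · simp only [infA, Pi.add_apply, Pi.smul_apply, Pi.single_apply, if_neg hj, smul_eq_mul,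
            mul_zero, add_zero]
          rw [min_eq_left (hab j), hc]
      rw [hsup, hinf] at h
      rw [hαi]; linarith
  · -- weak DR → submodular
    intro hDR x hx y hy
    set m : Fin n → ℝ := infA α x y with hmdef
    set s : Fin n → ℝ := supA α x y with hsdef
    have hαm : ∀ j, α j * m j = min (α j * x j) (α j * y j) := fun j => by
      rw [hmdef]; unfold infA; rw [hc]
    have hαs : ∀ j, α j * s j = max (α j * x j) (α j * y j) := fun j => by
      rw [hsdef]; unfold supA; rw [hc]
    have hmval : ∀ j, m j = x j ∨ m j = y j := by
      intro j
      rcases le_total (α j * x j) (α j * y j) with h | h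
      · left
        have h1 := hαm j; rw [min_eq_left h] at h1
        have h2 := hc j (m j); rw [h1, hc] at h2; exact h2.symm
      · right
        have h1 := hαm j; rw [min_eq_right h] at h1
        have h2 := hc j (m j); rw [h1, hc] at h2; exact h2.symm
    have hsval : ∀ j, s j = x j ∨ s j = y j := by
      intro j
      rcases le_total (α j * x j) (α j * y j) with h | h
      · right
        have h1 := hαs j; rw [max_eq_right h] at h1
        have h2 := hc j (s j); rw [h1, hc] at h2; exact h2.symm
      · left
        have h1 := hαs j; rw [max_eq_left h] at h1
        have h2 := hc j (s j); rw [h1, hc] at h2; exact h2.symm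
    have hzX : ∀ T : Finset (Fin n),
        (fun j => if j ∈ T then x j else m j) ∈ {x : Fin n → ℝ | ∀ i, l i ≤ x i ∧ x i ≤ u i} := by
      intro T j
      by_cases hj : j ∈ T
      · simp only [hj, if_true]; exact hx j
      · simp only [hj, if_false]
        rcases hmval j with h | h <;> rw [h]
        · exact hx j
        · exact hy j
    have hwX : ∀ T : Finset (Fin n),
        (fun j => if j ∈ T then s j else y j) ∈ {x : Fin n → ℝ | ∀ i, l i ≤ x i ∧ x i ≤ u i} := by
      intro T j
      by_cases hj : j ∈ T
      · simp only [hj, if_true]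
        rcases hsval j with h | h <;> rw [h]
        · exact hx j
        · exact hy j
      · simp only [hj, if_false]; exact hy j
    have hzw : ∀ T : Finset (Fin n),
        leA α (fun j => if j ∈ T then x j else m j) (fun j => if j ∈ T then s j else y j) := by
      intro T j
      by_cases hj : j ∈ T
      · simp only [hj, if_true]
        rw [hαs j]; exact le_max_left _ _
      · simp only [hj, if_false]
        rw [hαm j]; exact min_le_right _ _
    have key : ∀ T : Finset (Fin n),
        f (fun j => if j ∈ T then x j else m j) - f m ≥
          f (fun j => if j ∈ T then s j else y j) - f y := by
      intro T
      induction T using Finset.induction_on with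
      | empty => simp
      | @insert i T hiT ih =>
        rcases le_total (α i * x i) (α i * y i) with hxy | hxy
        · -- m i = x i, s i = y i : inserting i changes nothing
          have hmi : m i = x i := by
            have h1 := hαm i; rw [min_eq_left hxy] at h1
            have h2 := hc i (m i); rw [h1, hc] at h2; exact h2.symm
          have hsi : s i = y i := by
            have h1 := hαs i; rw [max_eq_right hxy] at h1
            have h2 := hc i (s i); rw [h1, hc] at h2; exact h2.symm
          have e1 : (fun j => if j ∈ insert i T then x j else m j)
              = (fun j => if j ∈ T then x j else m j) := by
            funext j
            by_cases hj : j = i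
            · subst hj; simp [hiT, hmi]
            · simp [Finset.mem_insert, hj]
          have e2 : (fun j => if j ∈ insert i T then s j else y j)
              = (fun j => if j ∈ T then s j else y j) := by
            funext j
            by_cases hj : j = i
            · subst hj; simp [hiT, hsi]
            · simp [Finset.mem_insert, hj]
          rw [e1, e2]; exact ih
        · -- m i = y i, s i = x i : a genuine step
          have hmi : m i = y i := by
            have h1 := hαm i; rw [min_eq_right hxy] at h1
            have h2 := hc i (m i); rw [h1, hc] at h2; exact h2.symm
          have hsi : s i = x i := by
            have h1 := hαs i; rw [max_eq_left hxy] at h1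
            have h2 := hc i (s i); rw [h1, hc] at h2; exact h2.symm
          rcases hα i with hαi | hαi
          · -- α i = 1, step up by x i - y i ≥ 0
            have hδ : 0 ≤ x i - y i := by
              rw [hαi] at hxy; simp only [one_mul] at hxy; linarith
            have hz' : (fun j => if j ∈ T then x j else m j)
                + (x i - y i) • (Pi.single i 1 : Fin n → ℝ)
                = (fun j => if j ∈ insert i T then x j else m j) := by
              funext j
              by_cases hj : j = i
              · subst hj
                simp only [Pi.add_apply, Pi.smul_apply, Pi.single_eq_same, smul_eq_mul, mul_one,
                  hiT, if_false, Finset.mem_insert, true_or, if_true, hmi]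
                ring
              · simp [Pi.single_apply, Finset.mem_insert, hj]
            have hw' : (fun j => if j ∈ T then s j else y j)
                + (x i - y i) • (Pi.single i 1 : Fin n → ℝ)
                = (fun j => if j ∈ insert i T then s j else y j) := by
              funext j
              by_cases hj : j = i
              · subst hj
                simp only [Pi.add_apply, Pi.smul_apply, Pi.single_eq_same, smul_eq_mul, mul_one,
                  hiT, if_false, Finset.mem_insert, true_or, if_true, hsi]
                ring
              · simp [Pi.single_apply, Finset.mem_insert, hj]
            have hzieq : (fun j => if j ∈ T then x j else m j) i
                = (fun j => if j ∈ T then s j else y j) i := by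
              simp only [hiT, if_false, hmi]
            have h := hDR _ (hzX T) _ (hwX T) (hzw T) i hzieq (x i - y i) hδ
              (by rw [hz']; exact hzX (insert i T)) (by rw [hw']; exact hwX (insert i T))
            rw [hz', hw', hαi] at h
            simp only [one_mul] at h
            linarith
          · -- α i = -1, step up by y i - x i ≥ 0 from the incremented points
            have hδ : 0 ≤ y i - x i := by
              rw [hαi] at hxy; linarith
            have hz' : (fun j => if j ∈ insert i T then x j else m j)
                + (y i - x i) • (Pi.single i 1 : Fin n → ℝ)
                = (fun j => if j ∈ T then x j else m j) := by
              funext j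
              by_cases hj : j = i
              · subst hj
                simp only [Pi.add_apply, Pi.smul_apply, Pi.single_eq_same, smul_eq_mul, mul_one,
                  hiT, if_false, Finset.mem_insert, true_or, if_true, hmi]
                ring
              · simp [Pi.single_apply, Finset.mem_insert, hj]
            have hw' : (fun j => if j ∈ insert i T then s j else y j)
                + (y i - x i) • (Pi.single i 1 : Fin n → ℝ)
                = (fun j => if j ∈ T then s j else y j) := by
              funext j
              by_cases hj : j = i
              · subst hj
                simp only [Pi.add_apply, Pi.smul_apply, Pi.single_eq_same, smul_eq_mul, mul_one,
                  hiT, if_false, Finset.mem_insert, true_or, if_true, hsi]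
                ring
              · simp [Pi.single_apply, Finset.mem_insert, hj]
            have hzieq : (fun j => if j ∈ insert i T then x j else m j) i
                = (fun j => if j ∈ insert i T then s j else y j) i := by
              simp only [Finset.mem_insert, true_or, if_true, hsi]
            have h := hDR _ (hzX (insert i T)) _ (hwX (insert i T)) (hzw (insert i T)) i hzieq
              (y i - x i) hδ
              (by rw [hz']; exact hzX T) (by rw [hw']; exact hwX T)
            rw [hz', hw', hαi] at h
            linarith
    have hk := key Finset.univ
    have e1 : (fun j => if j ∈ Finset.univ then x j else m j) = x := by
      funext j; simp
    have e2 : (fun j => if j ∈ Finset.univ then s j else y j) = s := by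
      funext j; simp
    rw [e1, e2] at hk
    show f x + f y ≥ f s + f m
    linarith
end
end

section
/- (Reduction from K_α-DR-submodular to DR-submodular maximization) Let α ∈ {−1, 1}ⁿ, let X' ⊆ ℝⁿ be a box (a product of intervals), and let g : ℝⁿ → ℝ be K_α-DR-submodular on X'. Define f(x) := g(α ⊙ x), where (α ⊙ x)ᵢ = αᵢ·xᵢ, and let X := {x ∈ ℝⁿ : α ⊙ x ∈ X'}. Then X is a box and f satisfies the ordinary DR property on X: for all a, b ∈ X with a ≤ b (componentwise), every coordinate i, and every k ≥ 0 such that a + k·eᵢ ∈ X and b + k·eᵢ ∈ X, f(a + k·eᵢ) − f(a) ≥ f(b + k·eᵢ) − f(b). -/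
noncomputable section

/-- `K_α`-DR-submodularity of `g` on a set `X'`. -/
def KDRSubmodular {n : ℕ} (α : Fin n → ℝ) (X' : Set (Fin n → ℝ))
    (g : (Fin n → ℝ) → ℝ) : Prop :=
  ∀ a ∈ X', ∀ b ∈ X', leA α a b → ∀ (i : Fin n) (k : ℝ), 0 ≤ k →
    (a + k • (Pi.single i 1 : Fin n → ℝ)) ∈ X' →
    (b + k • (Pi.single i 1 : Fin n → ℝ)) ∈ X' →
    α i * (g (a + k • (Pi.single i 1 : Fin n → ℝ)) - g a) ≥
      α i * (g (b + k • (Pi.single i 1 : Fin n → ℝ)) - g b)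

/-- a box (= product of intervals, i.e. of order-connected subsets of `ℝ`). -/
def IsBox {n : ℕ} (X : Set (Fin n → ℝ)) : Prop :=
  ∃ S : Fin n → Set ℝ, (∀ i, (S i).OrdConnected) ∧ X = {x | ∀ i, x i ∈ S i}

/-- Reduction from `K_α`-DR-submodular to DR-submodular maximization: with
`f(x) := g(α ⊙ x)` and `X := {x | α ⊙ x ∈ X'}`, the set `X` is a box and `f` satisfies the
ordinary DR property on `X`. -/
theorem stmt15 {n : ℕ} (hn : 1 ≤ n)
    (α : Fin n → ℝ) (hα : ∀ i, α i = 1 ∨ α i = -1)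
    (X' : Set (Fin n → ℝ)) (hbox : IsBox X')
    (g : (Fin n → ℝ) → ℝ) (hg : KDRSubmodular α X' g) :
    IsBox {x : Fin n → ℝ | (fun i => α i * x i) ∈ X'} ∧
      ∀ a ∈ {x : Fin n → ℝ | (fun i => α i * x i) ∈ X'},
        ∀ b ∈ {x : Fin n → ℝ | (fun i => α i * x i) ∈ X'},
        (∀ i, a i ≤ b i) → ∀ (i : Fin n) (k : ℝ), 0 ≤ k →
        (a + k • (Pi.single i 1 : Fin n → ℝ)) ∈
            {x : Fin n → ℝ | (fun i => α i * x i) ∈ X'} →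
        (b + k • (Pi.single i 1 : Fin n → ℝ)) ∈
            {x : Fin n → ℝ | (fun i => α i * x i) ∈ X'} →
        g (fun j => α j * (a + k • (Pi.single i 1 : Fin n → ℝ)) j) -
            g (fun j => α j * a j) ≥
          g (fun j => α j * (b + k • (Pi.single i 1 : Fin n → ℝ)) j) -
            g (fun j => α j * b j) := by
  obtain ⟨S, hS, rfl⟩ := hbox
  have hsq : ∀ j, α j * α j = 1 := by
    intro j; rcases hα j with h | h <;> rw [h] <;> norm_num
  constructor
  · refine ⟨fun i => {t | α i * t ∈ S i}, fun i => ?_, rfl⟩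
    constructor
    intro x hx y hy z hz
    rcases hα i with h | h
    · exact (hS i).out (by simpa [h] using hx) (by simpa [h] using hy)
        (by simp only [h, Set.mem_Icc] at hz ⊢; constructor <;> linarith [hz.1, hz.2])
    · exact (hS i).out (by simpa [h] using hy) (by simpa [h] using hx)
        (by simp only [h, Set.mem_Icc] at hz ⊢; constructor <;> linarith [hz.1, hz.2])
  · intro a ha b hb hab i k hk ha' hb'
    have key : ∀ c : Fin n → ℝ,
        (fun j => α j * (c + k • (Pi.single i 1 : Fin n → ℝ)) j)
          = (fun j => α j * c j) + (α i * k) • (Pi.single i 1 : Fin n → ℝ) := by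
      intro c; funext j
      by_cases hji : j = i
      · subst hji; simp [Pi.single_apply]; ring
      · simp [Pi.single_apply, hji]
    have hcancel : ∀ j, ∀ t : ℝ, α j * (α j * t) = t := by
      intro j t; rw [← mul_assoc, hsq j, one_mul]
    rcases hα i with h | h
    · have hkey1 : ∀ c : Fin n → ℝ,
          (fun j => α j * (c + k • (Pi.single i 1 : Fin n → ℝ)) j)
            = (fun j => α j * c j) + k • (Pi.single i 1 : Fin n → ℝ) := by
        intro c; rw [key c, h, one_mul]
      have hle : leA α (fun j => α j * a j) (fun j => α j * b j) := by
        intro j; simpa [hcancel j] using hab j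
      have := hg (fun j => α j * a j) ha (fun j => α j * b j) hb hle i k hk
        (by rw [← hkey1 a]; exact ha') (by rw [← hkey1 b]; exact hb')
      rw [h, one_mul, one_mul] at this
      rw [hkey1 a, hkey1 b]
      exact this
    · have h2 : ∀ c : Fin n → ℝ,
          ((fun j => α j * c j) + (α i * k) • (Pi.single i 1 : Fin n → ℝ))
              + k • (Pi.single i 1 : Fin n → ℝ) = (fun j => α j * c j) := by
        intro c; funext j
        by_cases hji : j = i
        · subst hji; simp [Pi.single_apply, h]; try ring
        · simp [Pi.single_apply, hji]
      have hle : leA α ((fun j => α j * a j) + (α i * k) • (Pi.single i 1 : Fin n → ℝ))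
          ((fun j => α j * b j) + (α i * k) • (Pi.single i 1 : Fin n → ℝ)) := by
        intro j
        by_cases hji : j = i
        · subst hji
          simp only [Pi.add_apply, Pi.smul_apply, Pi.single_apply, if_pos rfl,
            smul_eq_mul, mul_one, mul_add, hcancel j]
          try linarith [hab j]
        · simp only [Pi.add_apply, Pi.smul_apply, Pi.single_apply, if_neg hji,
            smul_eq_mul, mul_zero, add_zero, hcancel j]
          exact hab j
      have := hg _ (by rw [← key a]; exact ha') _ (by rw [← key b]; exact hb')
        hle i k hk (by rw [h2 a]; exact ha) (by rw [h2 b]; exact hb)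
      rw [h2 a, h2 b, h] at this
      rw [key a, key b, h]
      linarith
end
end

section
/- (DR-supermodularity of the mean-field Kullback-Leibler objective for log-submodular models) Let F be a submodular set function on subsets of [n], i.e., F(S) + F(T) ≥ F(S ∪ T) + F(S ∩ T) for all S, T ⊆ [n]. Define the multilinear extension G(x) = Σ_{S ⊆ [n]} (Π_{i∈S} xᵢ)·(Π_{j∉S} (1 − x_j))·F(S), the partition function Z = Σ_{S ⊆ [n]} exp(F(S)), and KL(x) = −G(x) + Σ_{i=1}^n (xᵢ·log xᵢ + (1 − xᵢ)·log(1 − xᵢ)) + log Z. Then KL is DR-supermodular on (0,1)ⁿ: for all a, b ∈ (0,1)ⁿ with a ≤ b (componentwise), every coordinate i, and every k ≥ 0 such that a + k·eᵢ ∈ (0,1)ⁿ and b + k·eᵢ ∈ (0,1)ⁿ, one has KL(a + k·eᵢ) − KL(a) ≤ KL(b + k·eᵢ) − KL(b). -/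
noncomputable section

open Finset

/-- the multilinear extension `G(x) = Σ_{S ⊆ [n]} (Π_{i∈S} xᵢ)·(Π_{j∉S}(1 − x_j))·F(S)`. -/
noncomputable def multilinearExt {n : ℕ} (F : Finset (Fin n) → ℝ) (x : Fin n → ℝ) : ℝ :=
  ∑ S : Finset (Fin n), (∏ i ∈ S, x i) * (∏ j ∈ Sᶜ, (1 - x j)) * F S

/-- the mean-field Kullback-Leibler objective
`KL(x) = −G(x) + Σᵢ (xᵢ log xᵢ + (1 − xᵢ) log(1 − xᵢ)) + log Z`. -/
noncomputable def klObj {n : ℕ} (F : Finset (Fin n) → ℝ) (x : Fin n → ℝ) : ℝ :=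
  -multilinearExt F x
    + ∑ i, (x i * Real.log (x i) + (1 - x i) * Real.log (1 - x i))
    + Real.log (∑ S : Finset (Fin n), Real.exp (F S))

namespace Stmt19Aux

variable {n : ℕ}

/-- the "discrete derivative" of the multilinear extension in direction `i`. -/
noncomputable def Dfun (F : Finset (Fin n) → ℝ) (i : Fin n) (x : Fin n → ℝ) : ℝ :=
  ∑ S ∈ Finset.univ.filter (fun S : Finset (Fin n) => i ∉ S),
    (∏ j ∈ S, x j) * (∏ j ∈ Sᶜ.erase i, (1 - x j)) * (F (insert i S) - F S)

lemma sum_insert_bij (i : Fin n) (f : Finset (Fin n) → ℝ) :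
    ∑ S ∈ Finset.univ.filter (fun S : Finset (Fin n) => i ∈ S), f S
      = ∑ S ∈ Finset.univ.filter (fun S : Finset (Fin n) => i ∉ S), f (insert i S) := by
  refine Finset.sum_nbij' (fun S => S.erase i) (fun S => insert i S) ?_ ?_ ?_ ?_ ?_ <;>
    intro S hS <;> simp only [Finset.mem_filter, Finset.mem_univ, true_and] at hS ⊢
  · exact Finset.notMem_erase i S
  · exact Finset.mem_insert_self i S
  · exact Finset.insert_erase hS
  · exact Finset.erase_insert hS
  · rw [Finset.insert_erase hS]

lemma multilinearExt_decomp (F : Finset (Fin n) → ℝ) (i : Fin n) (x : Fin n → ℝ) :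
    multilinearExt F x = ∑ S ∈ Finset.univ.filter (fun S : Finset (Fin n) => i ∉ S),
      (∏ j ∈ S, x j) * (∏ j ∈ Sᶜ.erase i, (1 - x j)) *
        (x i * F (insert i S) + (1 - x i) * F S) := by
  rw [multilinearExt, ← Finset.sum_filter_add_sum_filter_not Finset.univ
    (fun S : Finset (Fin n) => i ∈ S), sum_insert_bij]
  rw [← Finset.sum_add_distrib]
  refine Finset.sum_congr rfl ?_
  intro S hS
  simp only [Finset.mem_filter, Finset.mem_univ, true_and] at hS
  rw [Finset.compl_insert, Finset.prod_insert hS,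
    ← Finset.mul_prod_erase Sᶜ _ (Finset.mem_compl.2 hS)]
  ring

lemma multilinearExt_shift (F : Finset (Fin n) → ℝ) (i : Fin n) (x : Fin n → ℝ) (k : ℝ) :
    multilinearExt F (x + k • (Pi.single i 1 : Fin n → ℝ))
      = multilinearExt F x + k * Dfun F i x := by
  have hy : ∀ j, j ≠ i → (x + k • (Pi.single i 1 : Fin n → ℝ)) j = x j := by
    intro j hj; simp [Pi.single_apply, hj]
  have hyi : (x + k • (Pi.single i 1 : Fin n → ℝ)) i = x i + k := by simp
  rw [multilinearExt_decomp F i, multilinearExt_decomp F i x, Dfun, Finset.mul_sum,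
    ← Finset.sum_add_distrib]
  refine Finset.sum_congr rfl ?_
  intro S hS
  simp only [Finset.mem_filter, Finset.mem_univ, true_and] at hS
  have h1 : ∏ j ∈ S, (x + k • (Pi.single i 1 : Fin n → ℝ)) j = ∏ j ∈ S, x j := by
    refine Finset.prod_congr rfl fun j hj => hy j ?_
    rintro rfl; exact hS hj
  have h2 : ∏ j ∈ Sᶜ.erase i, (1 - (x + k • (Pi.single i 1 : Fin n → ℝ)) j)
      = ∏ j ∈ Sᶜ.erase i, (1 - x j) := by
    refine Finset.prod_congr rfl fun j hj => ?_
    rw [hy j (Finset.ne_of_mem_erase hj)]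
  rw [h1, h2, hyi]
  ring

lemma Dfun_decomp (F : Finset (Fin n) → ℝ) (i j : Fin n) (hij : j ≠ i) (x : Fin n → ℝ) :
    Dfun F i x = ∑ S ∈ Finset.univ.filter (fun S : Finset (Fin n) => i ∉ S ∧ j ∉ S),
      (∏ l ∈ S, x l) * (∏ l ∈ (Sᶜ.erase i).erase j, (1 - x l)) *
        (x j * (F (insert i (insert j S)) - F (insert j S))
          + (1 - x j) * (F (insert i S) - F S)) := by
  classical
  rw [Dfun, ← Finset.sum_filter_add_sum_filter_not
    (Finset.univ.filter (fun S : Finset (Fin n) => i ∉ S)) (fun S : Finset (Fin n) => j ∈ S)]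
  have e1 : (Finset.univ.filter (fun S : Finset (Fin n) => i ∉ S)).filter
      (fun S : Finset (Fin n) => j ∈ S)
      = Finset.univ.filter (fun S : Finset (Fin n) => j ∈ S ∧ i ∉ S) := by
    ext S; simp; tauto
  have e2 : (Finset.univ.filter (fun S : Finset (Fin n) => i ∉ S)).filter
      (fun S : Finset (Fin n) => j ∉ S)
      = Finset.univ.filter (fun S : Finset (Fin n) => i ∉ S ∧ j ∉ S) := by
    ext S; simp
  rw [e1, e2]
  have bij : ∑ S ∈ Finset.univ.filter (fun S : Finset (Fin n) => j ∈ S ∧ i ∉ S),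
      (∏ l ∈ S, x l) * (∏ l ∈ Sᶜ.erase i, (1 - x l)) * (F (insert i S) - F S)
      = ∑ S ∈ Finset.univ.filter (fun S : Finset (Fin n) => i ∉ S ∧ j ∉ S),
      (∏ l ∈ S, x l) * (x j * (∏ l ∈ (Sᶜ.erase i).erase j, (1 - x l)))
        * (F (insert i (insert j S)) - F (insert j S)) := by
    refine Finset.sum_nbij' (fun S => S.erase j) (fun S => insert j S) ?_ ?_ ?_ ?_ ?_ <;>
      intro S hS <;> simp only [Finset.mem_filter, Finset.mem_univ, true_and] at hS ⊢
    · exact ⟨fun h => hS.2 (Finset.mem_of_mem_erase h), Finset.notMem_erase j S⟩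
    · refine ⟨Finset.mem_insert_self j S, ?_⟩
      intro h
      rcases Finset.mem_insert.1 h with h | h
      · exact hij h.symm
      · exact hS.1 h
    · exact Finset.insert_erase hS.1
    · exact Finset.erase_insert hS.2
    · have hins : insert j (S.erase j) = S := Finset.insert_erase hS.1
      have hprod : ∏ l ∈ S, x l = x j * ∏ l ∈ S.erase j, x l :=
        (Finset.mul_prod_erase S x hS.1).symm
      have hcompl : ((S.erase j)ᶜ.erase i).erase j = Sᶜ.erase i := by
        ext l
        simp only [Finset.mem_erase, Finset.mem_compl]
        constructor
        · rintro ⟨hlj, hli, hl⟩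
          exact ⟨hli, fun hlS => hl ⟨hlj, hlS⟩⟩
        · rintro ⟨hli, hl⟩
          refine ⟨?_, hli, fun hmem => hl hmem.2⟩
          rintro rfl; exact hl hS.1
      rw [hins, hprod, hcompl]
      ring
  rw [bij, ← Finset.sum_add_distrib]
  refine Finset.sum_congr rfl ?_
  intro S hS
  simp only [Finset.mem_filter, Finset.mem_univ, true_and] at hS
  have hjmem : j ∈ Sᶜ.erase i := Finset.mem_erase.2 ⟨hij, Finset.mem_compl.2 hS.2⟩
  rw [← Finset.mul_prod_erase _ _ hjmem]
  ring

lemma inter_insert_eq (i j : Fin n) (S : Finset (Fin n)) (hij : j ≠ i)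
    (hi : i ∉ S) (hj : j ∉ S) : insert i S ∩ insert j S = S := by
  ext l
  simp only [Finset.mem_inter, Finset.mem_insert]
  constructor
  · rintro ⟨h1 | h1, h2 | h2⟩
    · subst h1; exact (hij h2.symm).elim
    · subst h1; exact (hi h2).elim
    · exact h1
    · exact h1
  · intro h; exact ⟨Or.inr h, Or.inr h⟩

lemma union_insert_eq (i j : Fin n) (S : Finset (Fin n)) :
    insert i S ∪ insert j S = insert i (insert j S) := by
  ext l; simp; tauto

lemma Dfun_step (F : Finset (Fin n) → ℝ)
    (hsub : ∀ S T : Finset (Fin n), F S + F T ≥ F (S ∪ T) + F (S ∩ T))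
    (i j : Fin n) (hij : j ≠ i) (x : Fin n → ℝ)
    (hx : ∀ l, 0 ≤ x l ∧ x l ≤ 1) (c : ℝ) (hc : 0 ≤ c) :
    Dfun F i (x + c • (Pi.single j 1 : Fin n → ℝ)) ≤ Dfun F i x := by
  have hy : ∀ l, l ≠ j → (x + c • (Pi.single j 1 : Fin n → ℝ)) l = x l := by
    intro l hl; simp [Pi.single_apply, hl]
  have hyj : (x + c • (Pi.single j 1 : Fin n → ℝ)) j = x j + c := by simp
  rw [Dfun_decomp F i j hij, Dfun_decomp F i j hij x]
  refine Finset.sum_le_sum ?_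
  intro S hS
  simp only [Finset.mem_filter, Finset.mem_univ, true_and] at hS
  have h1 : ∏ l ∈ S, (x + c • (Pi.single j 1 : Fin n → ℝ)) l = ∏ l ∈ S, x l := by
    refine Finset.prod_congr rfl fun l hl => hy l ?_
    rintro rfl; exact hS.2 hl
  have h2 : ∏ l ∈ (Sᶜ.erase i).erase j, (1 - (x + c • (Pi.single j 1 : Fin n → ℝ)) l)
      = ∏ l ∈ (Sᶜ.erase i).erase j, (1 - x l) := by
    refine Finset.prod_congr rfl fun l hl => ?_
    rw [hy l (Finset.ne_of_mem_erase hl)]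
  rw [h1, h2, hyj]
  have hQ : 0 ≤ (∏ l ∈ S, x l) * ∏ l ∈ (Sᶜ.erase i).erase j, (1 - x l) := by
    apply mul_nonneg
    · exact Finset.prod_nonneg fun l _ => (hx l).1
    · exact Finset.prod_nonneg fun l _ => by linarith [(hx l).2]
  have hFF : F (insert i (insert j S)) - F (insert j S) ≤ F (insert i S) - F S := by
    have := hsub (insert i S) (insert j S)
    rw [union_insert_eq i j S, inter_insert_eq i j S hij hS.1 hS.2] at this
    linarith
  nlinarith [mul_nonneg hQ hc, mul_le_mul_of_nonneg_left hFF (mul_nonneg hQ hc)]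

lemma Dfun_shift_i (F : Finset (Fin n) → ℝ) (i : Fin n) (x : Fin n → ℝ) (c : ℝ) :
    Dfun F i (x + c • (Pi.single i 1 : Fin n → ℝ)) = Dfun F i x := by
  have hy : ∀ l, l ≠ i → (x + c • (Pi.single i 1 : Fin n → ℝ)) l = x l := by
    intro l hl; simp [Pi.single_apply, hl]
  rw [Dfun, Dfun]
  refine Finset.sum_congr rfl ?_
  intro S hS
  simp only [Finset.mem_filter, Finset.mem_univ, true_and] at hS
  have h1 : ∏ l ∈ S, (x + c • (Pi.single i 1 : Fin n → ℝ)) l = ∏ l ∈ S, x l := by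
    refine Finset.prod_congr rfl fun l hl => hy l ?_
    rintro rfl; exact hS hl
  have h2 : ∏ l ∈ Sᶜ.erase i, (1 - (x + c • (Pi.single i 1 : Fin n → ℝ)) l)
      = ∏ l ∈ Sᶜ.erase i, (1 - x l) := by
    refine Finset.prod_congr rfl fun l hl => ?_
    rw [hy l (Finset.ne_of_mem_erase hl)]
  rw [h1, h2]

lemma Dfun_mono (F : Finset (Fin n) → ℝ)
    (hsub : ∀ S T : Finset (Fin n), F S + F T ≥ F (S ∪ T) + F (S ∩ T))
    (i : Fin n) (a b : Fin n → ℝ) (ha0 : ∀ l, 0 ≤ a l) (hb1 : ∀ l, b l ≤ 1)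
    (hab : ∀ l, a l ≤ b l) : Dfun F i b ≤ Dfun F i a := by
  classical
  have key : ∀ T : Finset (Fin n),
      Dfun F i (fun l => if l ∈ T then b l else a l) ≤ Dfun F i a := by
    intro T
    induction T using Finset.induction_on with
    | empty => simp
    | @insert j T hj ih =>
      have hstep : (fun l => if l ∈ insert j T then b l else a l)
          = (fun l => if l ∈ T then b l else a l)
            + (b j - a j) • (Pi.single j 1 : Fin n → ℝ) := by
        funext l
        by_cases hl : l = j
        · subst hl
          simp [hj]
        · simp [Pi.single_apply, hl, Finset.mem_insert]
      have hbounds : ∀ l, 0 ≤ (if l ∈ T then b l else a l)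
          ∧ (if l ∈ T then b l else a l) ≤ 1 := by
        intro l
        by_cases hl : l ∈ T <;> simp [hl]
        · exact ⟨le_trans (ha0 l) (hab l), hb1 l⟩
        · exact ⟨ha0 l, le_trans (hab l) (hb1 l)⟩
      rw [hstep]
      by_cases hji : j = i
      · subst hji
        rw [Dfun_shift_i]
        exact ih
      · exact le_trans (Dfun_step F hsub i j hji _ hbounds _ (by linarith [hab j])) ih
  have := key Finset.univ
  simpa using this

/-- the entropy term of `klObj`. -/
noncomputable def ent (t : ℝ) : ℝ := t * Real.log t + (1 - t) * Real.log (1 - t)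

lemma ent_convex : ConvexOn ℝ (Set.Icc (0 : ℝ) 1) ent := by
  have h1 : ConvexOn ℝ (Set.Icc (0 : ℝ) 1) (fun t : ℝ => t * Real.log t) :=
    Real.convexOn_mul_log.subset (fun t ht => ht.1) (convex_Icc _ _)
  have h2 : ConvexOn ℝ (Set.Icc (0 : ℝ) 1) (fun t : ℝ => (1 - t) * Real.log (1 - t)) := by
    have := h1.comp_affineMap (AffineMap.const ℝ ℝ (1 : ℝ) - AffineMap.id ℝ ℝ)
    have hset : (AffineMap.const ℝ ℝ (1 : ℝ) - AffineMap.id ℝ ℝ) ⁻¹' Set.Icc (0 : ℝ) 1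
        = Set.Icc (0 : ℝ) 1 := by
      ext t
      simp only [Set.mem_preimage, Set.mem_Icc, AffineMap.coe_sub, AffineMap.coe_const,
        AffineMap.coe_id, Pi.sub_apply, Function.const_apply, id_eq]
      constructor <;> rintro ⟨h1', h2'⟩ <;> constructor <;> linarith
    rw [hset] at this
    have e : (fun t : ℝ => (1 - t) * Real.log (1 - t))
        = (fun t : ℝ => t * Real.log t) ∘ ⇑(AffineMap.const ℝ ℝ (1 : ℝ) - AffineMap.id ℝ ℝ) := by
      funext t; simp
    rw [e]; exact this
  exact h1.add h2

lemma ent_incr {p q k : ℝ} (hpq : p ≤ q) (hk : 0 ≤ k) (hp : 0 ≤ p) (hq1 : q + k ≤ 1) :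
    ent (p + k) - ent p ≤ ent (q + k) - ent q := by
  rcases eq_or_lt_of_le hk with rfl | hk'
  · simp
  rcases eq_or_lt_of_le hpq with rfl | hpq'
  · simp
  have hf := ent_convex
  have hpmem : p ∈ Set.Icc (0 : ℝ) 1 := ⟨hp, by linarith⟩
  have hqmem : q ∈ Set.Icc (0 : ℝ) 1 := ⟨by linarith, by linarith⟩
  have hpkmem : p + k ∈ Set.Icc (0 : ℝ) 1 := ⟨by linarith, by linarith⟩
  have hqkmem : q + k ∈ Set.Icc (0 : ℝ) 1 := ⟨by linarith, by linarith⟩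
  have s1 := hf.secant_mono hpmem hpkmem hqkmem (by intro h; linarith) (by intro h; linarith) (by linarith)
  have s2 := hf.secant_mono hqkmem hpmem hqmem (by intro h; linarith) (by intro h; linarith) (by linarith)
  -- s1 : (ent (p+k) - ent p) / (p + k - p) ≤ (ent (q+k) - ent p) / (q + k - p)
  -- s2 : (ent p - ent (q+k)) / (p - (q+k)) ≤ (ent q - ent (q+k)) / (q - (q+k))
  have e1 : p + k - p = k := by ring
  have hd1 : (0:ℝ) < q + k - p := by linarith
  have hd2 : (ent p - ent (q + k)) / (p - (q + k))
      = (ent (q + k) - ent p) / (q + k - p) := by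
    rw [← neg_div_neg_eq]; ring_nf
  have hd3 : (ent q - ent (q + k)) / (q - (q + k))
      = (ent (q + k) - ent q) / k := by
    rw [← neg_div_neg_eq]; ring_nf
  rw [e1] at s1
  rw [hd2, hd3] at s2
  have : (ent (p + k) - ent p) / k ≤ (ent (q + k) - ent q) / k := le_trans s1 s2
  have := (div_le_div_iff_of_pos_right hk').1 this
  linarith

end Stmt19Aux

open Stmt19Aux in
/-- DR-supermodularity on `(0,1)ⁿ` of the mean-field KL objective for log-submodular models. -/
theorem stmt19 {n : ℕ} (hn : 1 ≤ n) (F : Finset (Fin n) → ℝ)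
    (hsub : ∀ S T : Finset (Fin n), F S + F T ≥ F (S ∪ T) + F (S ∩ T)) :
    ∀ a b : Fin n → ℝ, (∀ i, 0 < a i ∧ a i < 1) → (∀ i, 0 < b i ∧ b i < 1) →
      (∀ i, a i ≤ b i) → ∀ (i : Fin n) (k : ℝ), 0 ≤ k →
      (∀ j, 0 < (a + k • (Pi.single i 1 : Fin n → ℝ)) j ∧
        (a + k • (Pi.single i 1 : Fin n → ℝ)) j < 1) →
      (∀ j, 0 < (b + k • (Pi.single i 1 : Fin n → ℝ)) j ∧
        (b + k • (Pi.single i 1 : Fin n → ℝ)) j < 1) →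
      klObj F (a + k • (Pi.single i 1 : Fin n → ℝ)) - klObj F a ≤
        klObj F (b + k • (Pi.single i 1 : Fin n → ℝ)) - klObj F b := by
  intro a b ha hb hab i k hk ha' hb'
  have diff : ∀ x : Fin n → ℝ,
      klObj F (x + k • (Pi.single i 1 : Fin n → ℝ)) - klObj F x
        = -(k * Dfun F i x) + (ent (x i + k) - ent (x i)) := by
    intro x
    have hy : ∀ j, j ≠ i → (x + k • (Pi.single i 1 : Fin n → ℝ)) j = x j := by
      intro j hj; simp [Pi.single_apply, hj]
    have hyi : (x + k • (Pi.single i 1 : Fin n → ℝ)) i = x i + k := by simp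
    rw [klObj, klObj, multilinearExt_shift F i x k]
    have hsum : ∑ j, ((x + k • (Pi.single i 1 : Fin n → ℝ)) j
          * Real.log ((x + k • (Pi.single i 1 : Fin n → ℝ)) j)
        + (1 - (x + k • (Pi.single i 1 : Fin n → ℝ)) j)
          * Real.log (1 - (x + k • (Pi.single i 1 : Fin n → ℝ)) j))
        = ent (x i + k) + ∑ j ∈ ({i}ᶜ : Finset (Fin n)),
            (x j * Real.log (x j) + (1 - x j) * Real.log (1 - x j)) := by
      rw [Fintype.sum_eq_add_sum_compl i, hyi]
      congr 1
      refine Finset.sum_congr rfl ?_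
      intro j hj
      rw [hy j (by simpa using hj)]
    have hsum2 : ∑ j, (x j * Real.log (x j) + (1 - x j) * Real.log (1 - x j))
        = ent (x i) + ∑ j ∈ ({i}ᶜ : Finset (Fin n)),
            (x j * Real.log (x j) + (1 - x j) * Real.log (1 - x j)) := by
      rw [Fintype.sum_eq_add_sum_compl i]; rfl
    rw [hsum, hsum2]
    ring
  rw [diff a, diff b]
  have hD : Dfun F i b ≤ Dfun F i a :=
    Dfun_mono F hsub i a b (fun l => (ha l).1.le) (fun l => (hb l).2.le) hab
  have hE : ent (a i + k) - ent (a i) ≤ ent (b i + k) - ent (b i) := by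
    refine ent_incr (hab i) hk (ha i).1.le ?_
    have := (hb' i).2
    simpa using this.le
  have hkD : k * Dfun F i b ≤ k * Dfun F i a := mul_le_mul_of_nonneg_left hD hk
  linarith
end
end
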